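/- arXiv:1804.01060 — 9 statements merged into one kernel-verified Lean document; each statement's English description precedes it below -/
import Mathlib

section
/- Let G be a graph and ε > 0. If G is ε-coherent (i.e., |G| ≥ 2, every vertex has fewer than ε|G| neighbours, and for every two anticomplete vertex sets A, B we have min(|A|,|B|) < ε|G|), and Y ⊆ V(G) satisfies |Y| ≥ 3ε|G|, then there is a connected subset X ⊆ Y with |X| > |Y| − ε|G|. -/
/-- Two vertex sets are anticomplete: no edge of `G` joins them. -/
def Anticomplete {V : Type*} (G : SimpleGraph V) (A B : Finset V) : Prop :=
  ∀ a ∈ A, ∀ b ∈ B, ¬ G.Adj a b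

/-- `X` induces a connected subgraph of `G`. -/
def ConnSub {V : Type*} (G : SimpleGraph V) (X : Finset V) : Prop :=
  (G.induce (X : Set V)).Connected

/-- `G` is ε-coherent (with the counting mass `|X|/|G|`, inequalities cleared of
denominators): at least two vertices, all degrees less than `ε|G|`, and every pair of
anticomplete sets `A, B` has `min(|A|,|B|) < ε|G|`. -/
def CountCoherent {V : Type*} [Fintype V] (G : SimpleGraph V) (ε : ℝ) : Prop :=
  2 ≤ Fintype.card V ∧
  (∀ v : V, ((G.neighborSet v).ncard : ℝ) < ε * Fintype.card V) ∧
  ∀ A B : Finset V, Disjoint A B → Anticomplete G A B →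
    (min A.card B.card : ℝ) < ε * Fintype.card V

section Aux
open SimpleGraph Finset
variable {V : Type*} (G : SimpleGraph V) (Y : Finset V)


/-- reachable via a walk whose support stays in `Y`. -/
def ReachIn (v w : V) : Prop := ∃ p : G.Walk v w, ∀ x ∈ p.support, x ∈ Y

lemma ReachIn.refl {v : V} (hv : v ∈ Y) : ReachIn G Y v v :=
  ⟨SimpleGraph.Walk.nil, by simp [hv]⟩

lemma ReachIn.step {v w b : V} (h : ReachIn G Y v w) (hadj : G.Adj w b) (hb : b ∈ Y) :
    ReachIn G Y v b := by
  obtain ⟨p, hp⟩ := h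
  refine ⟨p.append (SimpleGraph.Walk.cons hadj SimpleGraph.Walk.nil), ?_⟩
  intro x hx
  rw [SimpleGraph.Walk.mem_support_append_iff] at hx
  rcases hx with hx | hx
  · exact hp x hx
  · simp at hx
    rcases hx with rfl | rfl
    · exact hp _ p.end_mem_support
    · exact hb

lemma ReachIn.mem {v w : V} (h : ReachIn G Y v w) : w ∈ Y := by
  obtain ⟨p, hp⟩ := h; exact hp _ p.end_mem_support

open scoped Classical in
/-- the component of `v` within `Y`. -/
noncomputable def CompIn (v : V) : Finset V := Y.filter (ReachIn G Y v)

lemma mem_CompIn {v w : V} : w ∈ CompIn G Y v ↔ w ∈ Y ∧ ReachIn G Y v w := by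
  classical simp [CompIn]

lemma CompIn_subset (v : V) : CompIn G Y v ⊆ Y := fun w hw => ((mem_CompIn G Y).mp hw).1

lemma self_mem_CompIn {v : V} (hv : v ∈ Y) : v ∈ CompIn G Y v :=
  (mem_CompIn G Y).mpr ⟨hv, ReachIn.refl G Y hv⟩

lemma CompIn_connected {v : V} (hv : v ∈ Y) : (G.induce ((CompIn G Y v : Finset V) : Set V)).Connected := by
  classical
  apply G.induce_connected_of_patches v (by exact_mod_cast self_mem_CompIn G Y hv)
  intro w hw
  obtain ⟨hwY, p, hp⟩ := (mem_CompIn G Y).mp (by exact_mod_cast hw)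
  refine ⟨{x | x ∈ p.support}, ?_, p.start_mem_support, p.end_mem_support, ?_⟩
  · intro x hx
    exact_mod_cast (mem_CompIn G Y).mpr ⟨hp x hx, ⟨p.takeUntil x hx, fun y hy =>
      hp y (SimpleGraph.Walk.support_takeUntil_subset p hx hy)⟩⟩
  · exact (p.connected_induce_support).preconnected _ _

/-- walks starting in a closed set stay in it -/
lemma reach_mem_closed [DecidableEq V] {S : Finset V} (hSY : S ⊆ Y)
    (hcl : Anticomplete G S (Y \ S)) {v w : V} (hv : v ∈ S) (h : ReachIn G Y v w) :
    w ∈ S := by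
  obtain ⟨p, hp⟩ := h
  induction p with
  | nil => exact hv
  | @cons a b c h q ih =>
    have hbY : b ∈ Y := hp b (by simp)
    have hbS : b ∈ S := by
      by_contra hbS
      exact hcl a hv b (Finset.mem_sdiff.mpr ⟨hbY, hbS⟩) h
    exact ih hbS (fun x hx => hp x (by simp [hx]))

end Aux

theorem stmt_0 {V : Type*} [Fintype V] (G : SimpleGraph V) (ε : ℝ) (hε : 0 < ε)
    (hcoh : CountCoherent G ε) (Y : Finset V)
    (hY : 3 * ε * Fintype.card V ≤ Y.card) :
    ∃ X ⊆ Y, ConnSub G X ∧ (Y.card : ℝ) - ε * Fintype.card V < X.card := by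
  classical
  obtain ⟨hn2, hdeg, hanti⟩ := hcoh
  set n : ℝ := (Fintype.card V : ℝ) with hn
  have hnpos : (0:ℝ) < n := by
    rw [hn]; exact_mod_cast lt_of_lt_of_le two_pos hn2
  have hεn : (0:ℝ) < ε * n := by positivity
  by_contra hcon
  push_neg at hcon
  -- every component of Y is small
  have hsmall : ∀ v ∈ Y, ((CompIn G Y v).card : ℝ) < ε * n := by
    intro v hv
    set C := CompIn G Y v with hC
    have hCY : C ⊆ Y := CompIn_subset G Y v
    have hanticl : Anticomplete G C (Y \ C) := by
      intro a ha b hb hab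
      obtain ⟨hbY, hbC⟩ := Finset.mem_sdiff.mp hb
      exact hbC ((mem_CompIn G Y).mpr ⟨hbY, ReachIn.step G Y ((mem_CompIn G Y).mp ha).2 hab hbY⟩)
    have hle := hcon C hCY (CompIn_connected G Y hv)
    have hcard : ((Y \ C).card : ℝ) = (Y.card : ℝ) - C.card := by
      rw [Finset.card_sdiff_of_subset hCY]
      push_cast [Nat.cast_sub (Finset.card_le_card hCY)]
      ring
    have hmin := hanti C (Y \ C) (Finset.disjoint_sdiff) hanticl
    rcases min_cases ((C.card : ℕ) : ℝ) (((Y \ C).card : ℕ) : ℝ) with ⟨heq, _⟩ | ⟨heq, hlt⟩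
    · rw [heq] at hmin; exact hmin
    · rw [heq] at hmin
      nlinarith [hmin, hcard, hle]
  -- minimal closed set of size ≥ εn
  set P : Finset V → Prop := fun S => S ⊆ Y ∧ Anticomplete G S (Y \ S) ∧ ε * n ≤ S.card with hP
  have hPY : P Y := ⟨subset_rfl, fun a _ b hb => by simp at hb, by nlinarith⟩
  obtain ⟨S, hSmem, hSmin⟩ := Finset.exists_min_image ((Finset.univ : Finset (Finset V)).filter P)
    Finset.card ⟨Y, Finset.mem_filter.mpr ⟨Finset.mem_univ Y, hPY⟩⟩
  obtain ⟨hSY, hScl, hScard⟩ : P S := (Finset.mem_filter.mp hSmem).2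
  have hSne : S.Nonempty := by
    rw [← Finset.card_pos]
    by_contra h
    simp [Finset.card_eq_zero, Finset.not_nonempty_iff_eq_empty] at h
    rw [h] at hScard; simp at hScard; nlinarith
  obtain ⟨v, hvS⟩ := hSne
  have hvY : v ∈ Y := hSY hvS
  set C := CompIn G Y v with hC
  have hCS : C ⊆ S := by
    intro w hw
    exact reach_mem_closed G Y hSY hScl hvS ((mem_CompIn G Y).mp hw).2
  have hCcl : ∀ a ∈ Y, ∀ b ∈ C, G.Adj a b → a ∈ C := by
    intro a ha b hb hab
    exact (mem_CompIn G Y).mpr ⟨ha, ReachIn.step G Y ((mem_CompIn G Y).mp hb).2 hab.symm ha⟩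
  -- S \ C is closed
  have hS'cl : Anticomplete G (S \ C) (Y \ (S \ C)) := by
    intro a ha b hb hab
    obtain ⟨haS, haC⟩ := Finset.mem_sdiff.mp ha
    obtain ⟨hbY, hbS'⟩ := Finset.mem_sdiff.mp hb
    by_cases hbS : b ∈ S
    · have hbC : b ∈ C := by
        by_contra hbC
        exact hbS' (Finset.mem_sdiff.mpr ⟨hbS, hbC⟩)
      exact haC (hCcl a (hSY haS) b hbC hab)
    · exact hScl a haS b (Finset.mem_sdiff.mpr ⟨hbY, hbS⟩) hab
  have hS'Y : S \ C ⊆ Y := (Finset.sdiff_subset).trans hSY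
  have hS'lt : (S \ C).card < S.card :=
    Finset.card_lt_card (Finset.sdiff_ssubset hCS ⟨v, self_mem_CompIn G Y hvY⟩)
  have hS'small : ((S \ C).card : ℝ) < ε * n := by
    by_contra h
    push_neg at h
    have : P (S \ C) := ⟨hS'Y, hS'cl, h⟩
    have := hSmin (S \ C) (Finset.mem_filter.mpr ⟨Finset.mem_univ _, this⟩)
    omega
  have hCsmall := hsmall v hvY
  have hScard2 : ((S).card : ℝ) < 2 * (ε * n) := by
    have : S.card ≤ (S \ C).card + C.card := by
      rw [Finset.card_sdiff_of_subset hCS]; omega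
    have h2 : ((S).card : ℝ) ≤ ((S \ C).card : ℝ) + C.card := by exact_mod_cast this
    linarith
  have hYS : ((Y \ S).card : ℝ) = (Y.card : ℝ) - S.card := by
    rw [Finset.card_sdiff_of_subset hSY]
    push_cast [Nat.cast_sub (Finset.card_le_card hSY)]
    ring
  have hmin := hanti S (Y \ S) (Finset.disjoint_sdiff) hScl
  rcases min_cases ((S.card : ℕ) : ℝ) (((Y \ S).card : ℕ) : ℝ) with ⟨heq, _⟩ | ⟨heq, _⟩
  · rw [heq] at hmin; linarith
  · rw [heq] at hmin; rw [hYS] at hmin; nlinarith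
end

section
/- Let (G, μ) be an ε-coherent massed graph and let Y ⊆ V(G) with μ(Y) ≥ 3ε. Then there is a connected subset X ⊆ Y with μ(X) > μ(Y) − ε. -/
open scoped Classical

/-- `μ` is a mass on the (finite) vertex set: normalized, monotone, and subadditive on
disjoint unions. -/
def IsMass {V : Type*} [Fintype V] [DecidableEq V] (μ : Finset V → ℝ) : Prop :=
  μ ∅ = 0 ∧ μ Finset.univ = 1 ∧ (∀ X Y : Finset V, X ⊆ Y → μ X ≤ μ Y) ∧
    ∀ X Y : Finset V, Disjoint X Y → μ (X ∪ Y) ≤ μ X + μ Y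

/-- The massed graph `(G, μ)` is ε-coherent. -/
noncomputable def MassCoherent {V : Type*} [Fintype V] [DecidableEq V] (G : SimpleGraph V)
    (μ : Finset V → ℝ) (ε : ℝ) : Prop :=
  (∀ v : V, μ {v} < ε) ∧ (∀ v : V, μ (G.neighborSet v).toFinset < ε) ∧
    ∀ A B : Finset V, Disjoint A B → Anticomplete G A B → min (μ A) (μ B) < ε

/-!
Call `A ⊆ Y` *closed in `Y`* if `A` is anticomplete to `Y \ A`. By coherence, either `A` or
`Y \ A` has mass `< ε`, so a closed set of mass `≥ ε` carries all of `μ Y` but less than `ε`.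
Take a maximal closed `A ⊆ Y` with `μ A < ε` (for instance `∅`) and a component `C` of
`Y \ A`; both `C` and `A ∪ C` are closed in `Y`. If `μ C ≥ ε`, then `C` is the connected set
sought. Otherwise, by maximality, `ε ≤ μ (A ∪ C) < 2ε`, and then `μ Y < 3ε`.
-/

section Graph

variable {V : Type*} {G : SimpleGraph V}

theorem Anticomplete.symm {A B : Finset V} (h : Anticomplete G A B) : Anticomplete G B A :=
  fun b hb a ha hab => h a ha b hb hab.symm

theorem connSub_singleton (v : V) : ConnSub G {v} := by
  rw [ConnSub, Finset.coe_singleton, SimpleGraph.induce_singleton_eq_top]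
  exact SimpleGraph.connected_top

variable [DecidableEq V]

theorem Anticomplete.sdiff_of_subset_sdiff {Y A C : Finset V} (hA : Anticomplete G A (Y \ A))
    (hCA : C ⊆ Y \ A) (hC : Anticomplete G C ((Y \ A) \ C)) : Anticomplete G C (Y \ C) := by
  intro c hc b hb
  by_cases hbA : b ∈ A
  · exact hA.symm c (hCA hc) b hbA
  · exact hC c hc b (by simp_all)

theorem Anticomplete.union_sdiff_union {Y A C : Finset V} (hA : Anticomplete G A (Y \ A))
    (hC : Anticomplete G C ((Y \ A) \ C)) : Anticomplete G (A ∪ C) (Y \ (A ∪ C)) := by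
  intro x hx b hb
  rw [Finset.mem_sdiff, Finset.mem_union, not_or] at hb
  rcases Finset.mem_union.1 hx with hxA | hxC
  · exact hA x hxA b (Finset.mem_sdiff.2 ⟨hb.1, hb.2.1⟩)
  · exact hC x hxC b (Finset.mem_sdiff.2 ⟨Finset.mem_sdiff.2 ⟨hb.1, hb.2.1⟩, hb.2.2⟩)

theorem ConnSub.insert {X : Finset V} (hX : ConnSub G X) {w x : V} (hx : x ∈ X)
    (hwx : G.Adj w x) : ConnSub G (insert w X) := by
  have hw : ConnSub G {w} := connSub_singleton w
  rw [ConnSub, Finset.coe_singleton] at hw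
  rw [ConnSub, Finset.coe_insert, ← Set.singleton_union]
  exact SimpleGraph.connected_induce_union hw.preconnected
    hX.preconnected rfl (Finset.mem_coe.2 hx) hwx

theorem exists_connSub_anticomplete_sdiff {Z : Finset V} {v : V} (hv : v ∈ Z) :
    ∃ C ⊆ Z, v ∈ C ∧ ConnSub G C ∧ Anticomplete G C (Z \ C) := by
  have hfin : {C : Finset V | C ⊆ Z ∧ v ∈ C ∧ ConnSub G C}.Finite :=
    Z.powerset.finite_toSet.subset fun C hC => Finset.mem_powerset.2 hC.1
  obtain ⟨C, -, ⟨hCZ, hvC, hC⟩, hmax⟩ :=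
    hfin.exists_le_maximal (a := {v})
      ⟨by simpa using hv, Finset.mem_singleton_self v, connSub_singleton v⟩
  refine ⟨C, hCZ, hvC, hC, fun c hc b hb hcb => ?_⟩
  rw [Finset.mem_sdiff] at hb
  have hle := hmax ⟨Finset.insert_subset hb.1 hCZ, Finset.mem_insert_of_mem hvC,
    hC.insert hc hcb.symm⟩ (Finset.subset_insert b C)
  exact hb.2 (hle (Finset.mem_insert_self b C))

end Graph

section Mass

variable {V : Type*} [Fintype V] [DecidableEq V] {μ : Finset V → ℝ}

theorem IsMass.le_add_sdiff (hμ : IsMass μ) {A Y : Finset V} (hAY : A ⊆ Y) :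
    μ Y ≤ μ A + μ (Y \ A) := by
  simpa [Finset.union_sdiff_of_subset hAY] using hμ.2.2.2 A (Y \ A) Finset.disjoint_sdiff

theorem MassCoherent.sub_lt_of_anticomplete_sdiff {G : SimpleGraph V} {ε : ℝ}
    (hcoh : MassCoherent G μ ε) (hμ : IsMass μ) {A Y : Finset V} (hAY : A ⊆ Y)
    (hA : Anticomplete G A (Y \ A)) (hεA : ε ≤ μ A) : μ Y - ε < μ A := by
  have hrest : μ (Y \ A) < ε := by
    simpa [hεA.not_gt] using hcoh.2.2 A (Y \ A) Finset.disjoint_sdiff hA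
  linarith [hμ.le_add_sdiff hAY]

end Mass

theorem stmt_1 {V : Type*} [Fintype V] [DecidableEq V] (G : SimpleGraph V)
    (μ : Finset V → ℝ) (hμ : IsMass μ) (ε : ℝ) (hε : 0 < ε)
    (hcoh : MassCoherent G μ ε) (Y : Finset V) (hY : 3 * ε ≤ μ Y) :
    ∃ X ⊆ Y, ConnSub G X ∧ μ Y - ε < μ X := by
  obtain ⟨A, -, ⟨hAY, hA, hAμ⟩, hAmax⟩ :=
    Finite.exists_le_maximal (p := fun A => A ⊆ Y ∧ Anticomplete G A (Y \ A) ∧ μ A < ε)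
      (a := ∅)
      ⟨Finset.empty_subset Y, fun _ h => absurd h (Finset.notMem_empty _), hμ.1 ▸ hε⟩
  obtain ⟨v, hv⟩ : (Y \ A).Nonempty :=
    Finset.sdiff_nonempty.2 fun hYA => by linarith [hμ.2.2.1 _ _ hYA]
  obtain ⟨C, hCA, hvC, hC, hCsep⟩ := exists_connSub_anticomplete_sdiff (G := G) hv
  have hCY : C ⊆ Y := hCA.trans Finset.sdiff_subset
  by_cases hεC : ε ≤ μ C
  · exact ⟨C, hCY, hC, hcoh.sub_lt_of_anticomplete_sdiff hμ hCY
      (hA.sdiff_of_subset_sdiff hCA hCsep) hεC⟩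
  have hACY : A ∪ C ⊆ Y := Finset.union_subset hAY hCY
  have hAC := hA.union_sdiff_union hCsep
  have hεAC : ε ≤ μ (A ∪ C) := by
    by_contra! hlt
    exact (Finset.mem_sdiff.1 hv).2 (hAmax ⟨hACY, hAC, hlt⟩ Finset.subset_union_left
      (Finset.mem_union_right A hvC))
  have hY_lt := hcoh.sub_lt_of_anticomplete_sdiff hμ hACY hAC hεAC
  have hAC_le : μ (A ∪ C) ≤ μ A + μ C :=
    hμ.2.2.2 A C (Finset.disjoint_left.2 fun _ ha haC => (Finset.mem_sdiff.1 (hCA haC)).2 ha)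
  linarith
end

section
/- Let (G, μ) be an ε-coherent massed graph, and suppose k ≥ 1 and λ = 1/2^t − ε > 0 where k = 2^t. Then there exist pairwise disjoint subsets Y₁,…,Y_k of V(G) with μ(Y_i) ≥ λ for each i. More precisely: given a mass μ on G (monotone, subadditive, μ(V(G))=1) such that every singleton has mass < ε, one can greedily choose disjoint sets Y₁,…,Y_k each of mass between λ and λ+ε. -/
lemma extract_aux {V : Type*} [Fintype V] [DecidableEq V] (μ : Finset V → ℝ)
    (hμ : IsMass μ) (ε lam : ℝ) (hlampos : 0 < lam) (hsing : ∀ v : V, μ {v} < ε)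
    (S : Finset V) (hS : lam ≤ μ S) :
    ∃ T, T ⊆ S ∧ lam ≤ μ T ∧ μ T ≤ lam + ε := by
  obtain ⟨h0, h1, hmono, hsub⟩ := hμ
  set s := (S.powerset).filter (fun T => lam ≤ μ T) with hs
  have hne : s.Nonempty := ⟨S, by simp [hs, hS]⟩
  obtain ⟨T, hTs, hTmin⟩ := Finset.exists_min_image s Finset.card hne
  simp only [hs, Finset.mem_filter, Finset.mem_powerset] at hTs
  have hTne : T.Nonempty := by
    rcases T.eq_empty_or_nonempty with h | h
    · exfalso; rw [h, h0] at hTs; linarith [hTs.2]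
    · exact h
  obtain ⟨v, hv⟩ := hTne
  have herase : μ (T.erase v) < lam := by
    by_contra hge
    push_neg at hge
    have hmem : T.erase v ∈ s := by
      simp only [hs, Finset.mem_filter, Finset.mem_powerset]
      exact ⟨(T.erase_subset v).trans hTs.1, hge⟩
    have h1' := hTmin _ hmem
    have h2' := Finset.card_erase_lt_of_mem hv
    omega
  refine ⟨T, hTs.1, hTs.2, ?_⟩
  have hd : Disjoint {v} (T.erase v) := by simp
  have hun : {v} ∪ T.erase v = T := by
    rw [← Finset.insert_eq, Finset.insert_erase hv]
  have := hsub _ _ hd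
  rw [hun] at this
  have := hsing v
  linarith

lemma mass_biUnion_le {V : Type*} [Fintype V] [DecidableEq V] (μ : Finset V → ℝ)
    (hμ : IsMass μ) {n : ℕ} (Y : Fin n → Finset V)
    (hd : ∀ i j : Fin n, i ≠ j → Disjoint (Y i) (Y j)) (s : Finset (Fin n)) :
    μ (s.biUnion Y) ≤ ∑ i ∈ s, μ (Y i) := by
  obtain ⟨h0, h1, hmono, hsub⟩ := hμ
  induction s using Finset.induction_on with
  | empty => simp [h0]
  | @insert a s ha ih =>
    rw [Finset.biUnion_insert, Finset.sum_insert ha]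
    have hdis : Disjoint (Y a) (s.biUnion Y) := by
      rw [Finset.disjoint_biUnion_right]
      intro i hi
      exact hd a i (fun h => ha (h ▸ hi))
    calc μ (Y a ∪ s.biUnion Y) ≤ μ (Y a) + μ (s.biUnion Y) := hsub _ _ hdis
      _ ≤ μ (Y a) + ∑ i ∈ s, μ (Y i) := by linarith

theorem stmt_9 {V : Type*} [Fintype V] [DecidableEq V] (G : SimpleGraph V)
    (μ : Finset V → ℝ) (hμ : IsMass μ) (ε lam : ℝ) (hε : 0 < ε)
    (t k : ℕ) (hk : k = 2 ^ t) (hk1 : 1 ≤ k)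
    (hlam : lam = 1 / (2 ^ t : ℝ) - ε) (hlampos : 0 < lam)
    (hsing : ∀ v : V, μ {v} < ε) :
    ∃ Y : Fin k → Finset V, (∀ i j : Fin k, i ≠ j → Disjoint (Y i) (Y j)) ∧
      ∀ i : Fin k, lam ≤ μ (Y i) ∧ μ (Y i) ≤ lam + ε := by
  obtain ⟨h0, h1, hmono, hsub⟩ := hμ
  have hkpos : (0:ℝ) < (k:ℝ) := by exact_mod_cast hk1
  have hlamε : lam + ε = 1 / (k:ℝ) := by
    rw [hlam, hk]; push_cast; ring
  have key : ∀ n, n ≤ k → ∃ Y : Fin n → Finset V,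
      (∀ i j : Fin n, i ≠ j → Disjoint (Y i) (Y j)) ∧
      ∀ i : Fin n, lam ≤ μ (Y i) ∧ μ (Y i) ≤ lam + ε := by
    intro n
    induction n with
    | zero => intro _; exact ⟨fun i => i.elim0, fun i => i.elim0, fun i => i.elim0⟩
    | succ n ih =>
      intro hn
      obtain ⟨Y, hYd, hYm⟩ := ih (Nat.le_of_succ_le hn)
      set U := Finset.univ.biUnion Y with hU
      have hUle : μ U ≤ (n:ℝ) * (lam + ε) := by
        calc μ U ≤ ∑ i ∈ Finset.univ, μ (Y i) :=
              mass_biUnion_le μ ⟨h0, h1, hmono, hsub⟩ Y hYd Finset.univ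
          _ ≤ ∑ _i ∈ (Finset.univ : Finset (Fin n)), (lam + ε) :=
              Finset.sum_le_sum (fun i _ => (hYm i).2)
          _ = (n:ℝ) * (lam + ε) := by rw [Finset.sum_const, Finset.card_univ, Fintype.card_fin, nsmul_eq_mul]
      have hcompl : lam ≤ μ Uᶜ := by
        have hdu : Disjoint U Uᶜ := disjoint_compl_right
        have hun : U ∪ Uᶜ = Finset.univ := Finset.union_compl U
        have h2 := hsub _ _ hdu
        rw [hun, h1] at h2
        have hnlek : (n:ℝ) + 1 ≤ (k:ℝ) := by exact_mod_cast hn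
        have hkinv : (0:ℝ) < 1 / (k:ℝ) := by positivity
        -- μ Uᶜ ≥ 1 - n/k ≥ 1/k = lam + ε ≥ lam
        have : (n:ℝ) * (lam + ε) ≤ 1 - (lam + ε) := by
          rw [hlamε]
          have h3 : ((n:ℝ) + 1) * (1 / ↑k) ≤ (k:ℝ) * (1 / ↑k) :=
            mul_le_mul_of_nonneg_right hnlek (le_of_lt hkinv)
          have h4 : (k:ℝ) * (1 / ↑k) = 1 := by field_simp
          nlinarith
        nlinarith
      obtain ⟨T, hTsub, hTm⟩ := extract_aux μ ⟨h0, h1, hmono, hsub⟩ ε lam hlampos hsing Uᶜ hcompl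
      refine ⟨Fin.snoc Y T, ?_, ?_⟩
      · intro i j hij
        have hTd : ∀ m : Fin n, Disjoint (Y m) T := by
          intro m
          have hsubU : Y m ⊆ U := Finset.subset_biUnion_of_mem Y (Finset.mem_univ m)
          exact Finset.disjoint_left.mpr fun x hx hxT =>
            (Finset.mem_compl.mp (hTsub hxT)) (hsubU hx)
        induction i using Fin.lastCases with
        | last =>
          induction j using Fin.lastCases with
          | last => exact absurd rfl hij
          | cast j => simpa using (hTd j).symm
        | cast i =>
          induction j using Fin.lastCases with
          | last => simpa using hTd i
          | cast j =>
            simp only [Fin.snoc_castSucc]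
            exact hYd i j (fun h => hij (by rw [h]))
      · intro i
        induction i using Fin.lastCases with
        | last => simpa using hTm
        | cast i => simpa using hYm i
  exact key k le_rfl
end

section
/- Let G be a graph that is ε-coherent (with counting mass μ(X) = |X|/|G|) and let Z ⊆ V(G) with |Z| ≥ δ|G| where δ = ε/ε_r for some ε_r ∈ (0, 1/2]. Suppose that for every vertex v ∈ Z, |N^{r+1}_{G[Z]}[v]| < |Z|/2. If furthermore there is no pair of anticomplete subsets A, B of Z with |A|, |B| ≥ ε|G|, then there is no vertex v ∈ Z with |N^r_{G[Z]}[v]| ≥ ε_r|Z|. (Equivalently: the existence of such a vertex yields a contradiction, since N^r_{G[Z]}[v] and Z ∖ N^{r+1}_{G[Z]}[v] are anticomplete sets each of size ≥ ε|G|.) -/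
open scoped Classical

/-- The closed ball of radius `r` around `v` in `H`, as a finset: vertices reachable
from `v` at distance at most `r`. -/
noncomputable def ball {W : Type*} [Fintype W] (H : SimpleGraph W) (v : W) (r : ℕ) :
    Finset W :=
  Set.toFinset {w | H.Reachable v w ∧ H.dist v w ≤ r}

theorem stmt_12 {V : Type*} [Fintype V] [DecidableEq V] (G : SimpleGraph V)
    (ε epsr : ℝ) (r : ℕ) (hepsr : 0 < epsr) (hepsr2 : epsr ≤ 1 / 2) (hε : 0 < ε)
    (hcoh : CountCoherent G ε) (Z : Finset V)
    (hZ : (ε / epsr) * Fintype.card V ≤ Z.card)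
    (hsmall : ∀ v : (Z : Set V),
      ((ball (G.induce (Z : Set V)) v (r + 1)).card : ℝ) < (Z.card : ℝ) / 2)
    (hnoanti : ¬ ∃ A B : Finset V, A ⊆ Z ∧ B ⊆ Z ∧ Disjoint A B ∧ Anticomplete G A B ∧
      ε * Fintype.card V ≤ A.card ∧ ε * Fintype.card V ≤ B.card) :
    ¬ ∃ v : (Z : Set V), epsr * Z.card ≤ ((ball (G.induce (Z : Set V)) v r).card : ℝ) := by
  rintro ⟨v, hv⟩
  set H := G.induce (Z : Set V) with hH
  set A : Finset V := (ball H v r).image Subtype.val with hA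
  set B : Finset V := Z \ (ball H v (r + 1)).image Subtype.val with hB
  have hεV : ε * Fintype.card V ≤ epsr * Z.card := by
    have := mul_le_mul_of_nonneg_left hZ hepsr.le
    calc ε * Fintype.card V = epsr * ((ε / epsr) * Fintype.card V) := by
          field_simp
      _ ≤ epsr * Z.card := this
  -- membership of balls
  have hball : ∀ (s : ℕ) (w : (Z : Set V)),
      w ∈ ball H v s ↔ H.Reachable v w ∧ H.dist v w ≤ s := by
    intro s w
    simp [ball, Set.mem_toFinset]
  have hsub : ball H v r ⊆ ball H v (r + 1) := by
    intro w hw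
    rw [hball] at hw ⊢
    exact ⟨hw.1, hw.2.trans (Nat.le_succ r)⟩
  have hAZ : A ⊆ Z := by
    intro a ha
    rw [hA, Finset.mem_image] at ha
    obtain ⟨a', _, rfl⟩ := ha
    exact a'.2
  have hBZ : B ⊆ Z := Finset.sdiff_subset
  have hdisj : Disjoint A B := by
    rw [Finset.disjoint_left]
    intro a ha hb
    rw [hB, Finset.mem_sdiff] at hb
    exact hb.2 (Finset.image_subset_image hsub ha)
  have hanti : Anticomplete G A B := by
    intro a ha b hb hab
    rw [hA, Finset.mem_image] at ha
    obtain ⟨a', ha', rfl⟩ := ha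
    rw [hB, Finset.mem_sdiff] at hb
    set b' : (Z : Set V) := ⟨b, hb.1⟩ with hb'
    have hadj : H.Adj a' b' := hab
    rw [hball] at ha'
    apply hb.2
    rw [Finset.mem_image]
    refine ⟨b', ?_, rfl⟩
    rw [hball]
    constructor
    · exact ha'.1.trans hadj.reachable
    · obtain ⟨p, hp⟩ := ha'.1.exists_walk_length_eq_dist
      have := SimpleGraph.dist_le (p.concat hadj)
      rw [SimpleGraph.Walk.length_concat, hp] at this
      omega
  have hAcard : epsr * Z.card ≤ (A.card : ℝ) := by
    rw [hA, Finset.card_image_of_injective _ Subtype.val_injective]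
    exact hv
  have hBcard : ε * Fintype.card V ≤ (B.card : ℝ) := by
    have hsubZ : (ball H v (r + 1)).image Subtype.val ⊆ Z := by
      intro a ha
      rw [Finset.mem_image] at ha
      obtain ⟨a', _, rfl⟩ := ha
      exact a'.2
    have hcard : B.card = Z.card - ((ball H v (r + 1)).image Subtype.val).card :=
      Finset.card_sdiff_of_subset hsubZ
    have himg : (((ball H v (r + 1)).image Subtype.val).card : ℝ) < (Z.card : ℝ) / 2 := by
      rw [Finset.card_image_of_injective _ Subtype.val_injective]
      exact hsmall v
    have hle : ((ball H v (r + 1)).image Subtype.val).card ≤ Z.card :=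
      Finset.card_le_card hsubZ
    have hBreal : (B.card : ℝ) = (Z.card : ℝ) - (((ball H v (r + 1)).image Subtype.val).card : ℝ) := by
      rw [hcard]
      push_cast [hle]
      ring
    have h1 : (Z.card : ℝ) / 2 ≤ (B.card : ℝ) := by
      rw [hBreal]; linarith
    have h2 : epsr * Z.card ≤ (Z.card : ℝ) / 2 := by
      have : (0:ℝ) ≤ Z.card := Nat.cast_nonneg _
      nlinarith
    linarith
  exact hnoanti ⟨A, B, hAZ, hBZ, hdisj, hanti, hεV.trans hAcard, hBcard⟩
end

section
/- If the ideal of H-free graphs has the strong Erdős–Hajnal property, then H is a forest. (Equivalently: for every graph H containing a cycle and every ε > 0, there exists an H-free graph G with at least two vertices containing no two disjoint sets A, B, both complete or both anticomplete, of size at least ε|G|.) -/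
/-!
If `H` has a cycle, of length `k` say, then every `C_k`-free graph is `H`-free, so it suffices to
find, for every `m`, `C_k`-free graphs `G` with no disjoint complete or anticomplete sets of size
`|G| / m`. Take the random graph `G(n, p)` with `p = 1 / (S + 1)` and `n = 16 m² S`, where
`S = 2 (16 m²)^k`. The expected number of labelled `k`-cycles is at most `(np)^k < S / 2`, and a
fixed pair of disjoint `r`-sets, `r = 8 m S`, is homogeneous with probability at most
`2 (1 - p)^(r²) ≤ 2 · 2^(-8mr)`, which beats the `4^n = 2^(4mr)` choices of the pair. In an
outcome where neither bad event happens, deleting one vertex from each `k`-cycle leaves more than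
`n - S ≥ m r` vertices and no `k`-cycle, while sets of size `r` still cannot be homogeneous.
-/

/-- A finite graph, presented as a number of vertices together with a graph on `Fin n`. -/
abbrev GraphOn := Σ n : ℕ, SimpleGraph (Fin n)

/-- `H` is (isomorphic to) an induced subgraph of `G`. -/
def Embeds (H G : GraphOn) : Prop :=
  ∃ f : Fin H.1 → Fin G.1, Function.Injective f ∧
    ∀ a b, H.2.Adj a b ↔ G.2.Adj (f a) (f b)

/-- A class of graphs has the strong Erdős–Hajnal property: for some `ε > 0`, every member
with at least two vertices has two disjoint linear-sized sets that are complete or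
anticomplete to each other. -/
def StrongEH (I : Set GraphOn) : Prop :=
  ∃ ε : ℝ, 0 < ε ∧ ∀ G ∈ I, 2 ≤ G.1 →
    ∃ A B : Finset (Fin G.1), Disjoint A B ∧
      ε * (G.1 : ℝ) ≤ A.card ∧ ε * (G.1 : ℝ) ≤ B.card ∧
      ((∀ a ∈ A, ∀ b ∈ B, G.2.Adj a b) ∨ (∀ a ∈ A, ∀ b ∈ B, ¬ G.2.Adj a b))

open Finset Function

section LabelCounting
variable {α β : Type*} [Fintype α] [DecidableEq α] [Fintype β] [DecidableEq β]

theorem card_filter_forall_mem_mul_pow (P : Finset α) (s : Finset β) :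
    #{ω : α → β | ∀ a ∈ P, ω a ∈ s} * Fintype.card β ^ #P =
      #s ^ #P * Fintype.card β ^ Fintype.card α := by
  have hpi : ({ω : α → β | ∀ a ∈ P, ω a ∈ s} : Finset _) =
      Fintype.piFinset fun a => if a ∈ P then s else univ := by
    ext ω
    simp only [mem_filter, mem_univ, true_and, Fintype.mem_piFinset]
    exact forall_congr' fun a => by split_ifs <;> simp_all
  rw [hpi, Fintype.card_piFinset, ← card_compl_add_card P]
  simp only [apply_ite Finset.card, card_univ]
  rw [prod_ite, prod_const, prod_const, filter_mem_eq_inter, univ_inter, pow_add, mul_assoc]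
  congr 4
  ext
  simp

theorem card_filter_mul_pow_le {Q : (α → β) → Prop} [DecidablePred Q] (P : Finset α)
    (s : Finset β) (hQ : ∀ ω, Q ω → ∀ a ∈ P, ω a ∈ s) :
    #{ω | Q ω} * Fintype.card β ^ #P ≤ #s ^ #P * Fintype.card β ^ Fintype.card α := by
  refine le_trans (Nat.mul_le_mul_right _ (card_le_card fun ω hω => ?_))
    (card_filter_forall_mem_mul_pow P s).le
  simp only [mem_filter, mem_univ, true_and] at hω ⊢
  exact hQ ω hω

end LabelCounting

theorem two_mul_pow_self_le_succ_pow {S : ℕ} (hS : 0 < S) : 2 * S ^ S ≤ (S + 1) ^ S := by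
  have := pow_add_mul_le_add_pow (a := S) (b := 1) (Nat.zero_le _) (Nat.zero_le _) S
  rwa [mul_one, Nat.cast_id, ← pow_succ', Nat.sub_add_cancel hS, ← two_mul] at this

theorem four_mul_four_pow_mul_pow_lt {S t : ℕ} (hS : 0 < S) (ht : 0 < t) :
    4 * 4 ^ (2 * t) * S ^ (S * (8 * t)) < (S + 1) ^ (S * (8 * t)) :=
  calc 4 * 4 ^ (2 * t) * S ^ (S * (8 * t))
      = 2 ^ (4 * t + 2) * S ^ (S * (8 * t)) := by
        rw [show 4 ^ (2 * t) = 2 ^ (4 * t) by rw [pow_mul, pow_mul]; norm_num]; ring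
    _ < 2 ^ (8 * t) * S ^ (S * (8 * t)) :=
      Nat.mul_lt_mul_of_pos_right (Nat.pow_lt_pow_right (by norm_num) (by omega)) (by positivity)
    _ = (2 * S ^ S) ^ (8 * t) := by rw [mul_pow, ← pow_mul]
    _ ≤ ((S + 1) ^ S) ^ (8 * t) := Nat.pow_le_pow_left (two_mul_pow_self_le_succ_pow hS) _
    _ = (S + 1) ^ (S * (8 * t)) := by rw [← pow_mul]

namespace SimpleGraph

variable {V V' W : Type*}

def IsHomogeneousPair (G : SimpleGraph V) (A B : Finset V) : Prop :=
  (∀ a ∈ A, ∀ b ∈ B, G.Adj a b) ∨ ∀ a ∈ A, ∀ b ∈ B, ¬ G.Adj a b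

def HasHomogeneousPair (G : SimpleGraph V) (r : ℕ) : Prop :=
  ∃ A B : Finset V, Disjoint A B ∧ r ≤ #A ∧ r ≤ #B ∧ G.IsHomogeneousPair A B

theorem IsHomogeneousPair.mono {G : SimpleGraph V} {A B A' B' : Finset V}
    (h : G.IsHomogeneousPair A B) (hA : A' ⊆ A) (hB : B' ⊆ B) : G.IsHomogeneousPair A' B' :=
  h.imp (fun h a ha b hb => h a (hA ha) b (hB hb)) fun h a ha b hb => h a (hA ha) b (hB hb)

theorem HasHomogeneousPair.exists_card_eq {G : SimpleGraph V} {r : ℕ}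
    (h : G.HasHomogeneousPair r) :
    ∃ A B : Finset V, Disjoint A B ∧ #A = r ∧ #B = r ∧ G.IsHomogeneousPair A B := by
  obtain ⟨A, B, hAB, hA, hB, hhom⟩ := h
  obtain ⟨A', hA'A, rfl⟩ := exists_subset_card_eq hA
  obtain ⟨B', hB'B, hB'⟩ := exists_subset_card_eq hB
  exact ⟨A', B', hAB.mono hA'A hB'B, rfl, hB', hhom.mono hA'A hB'B⟩

theorem HasHomogeneousPair.of_embedding {G : SimpleGraph V} {G' : SimpleGraph V'} {r : ℕ}
    (f : G' ↪g G) (h : G'.HasHomogeneousPair r) : G.HasHomogeneousPair r := by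
  obtain ⟨A, B, hAB, hA, hB, hhom⟩ := h
  refine ⟨A.map f.toEmbedding, B.map f.toEmbedding, (disjoint_map _).2 hAB, by rwa [card_map],
    by rwa [card_map], ?_⟩
  simp only [IsHomogeneousPair, forall_mem_map, RelEmbedding.coe_toEmbedding, f.map_adj_iff]
  exact hhom

open Classical in
theorem labelledCopyCount_eq_card_filter [Fintype V] [Fintype W] (G : SimpleGraph V)
    (F : SimpleGraph W) :
    G.labelledCopyCount F =
      #{f : W → V | Injective f ∧ ∀ a b, F.Adj a b → G.Adj (f a) (f b)} := by
  rw [labelledCopyCount, ← Fintype.card_subtype]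
  exact Fintype.card_congr
    { toFun c := ⟨c, c.injective, fun _ _ => c.toHom.map_adj⟩
      invFun f := ⟨⟨f.1, f.2.2 _ _⟩, f.2.1⟩ }

theorem exists_free_comap_card_le_add_labelledCopyCount [Fintype V] [Fintype W] [Nonempty W]
    (G : SimpleGraph V) (F : SimpleGraph W) :
    ∃ (N : ℕ) (e : Fin N ↪ V), Fintype.card V ≤ N + G.labelledCopyCount F ∧
      F.Free (G.comap e) := by
  classical
  obtain ⟨w⟩ := ‹Nonempty W›
  set D : Finset V := univ.image fun c : F.Copy G => c w
  set e : Fin #Dᶜ ↪ V := Dᶜ.equivFin.symm.toEmbedding.trans (Embedding.subtype _)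
  refine ⟨#Dᶜ, e, ?_, ?_⟩
  · have hD : #D ≤ G.labelledCopyCount F := by
      refine card_image_le.trans_eq ?_
      rw [card_univ, labelledCopyCount]
    rw [card_compl]
    omega
  · rintro ⟨c⟩
    have hD : ((Embedding.comap e G).toCopy.comp c) w ∈ D := mem_image_of_mem _ (mem_univ _)
    exact mem_compl.1 (Dᶜ.equivFin.symm (c w)).2 hD

theorem card_edgeFinset_cycleGraph (n : ℕ) : #(cycleGraph (n + 3)).edgeFinset = n + 3 := by
  have := (cycleGraph (n + 3)).sum_degrees_eq_twice_card_edges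
  simp only [cycleGraph_degree_three_le, sum_const, card_univ, Fintype.card_fin,
    smul_eq_mul] at this
  omega

theorem card_image_sym2Mk_product [DecidableEq V] {A B : Finset V} (hAB : Disjoint A B) :
    #((A ×ˢ B).image fun ab => s(ab.1, ab.2)) = #A * #B := by
  rw [card_image_of_injOn, card_product]
  rintro ⟨a, b⟩ hab ⟨a', b'⟩ hab' h
  simp only [coe_product, Set.mem_prod, mem_coe] at hab hab'
  rcases Sym2.eq_iff.1 h with ⟨rfl, rfl⟩ | ⟨rfl, -⟩
  · rfl
  · exact absurd hab'.2 (Finset.disjoint_left.1 hAB hab.1)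

/-- For uniformly random `ω` this is the binomial random graph with edge probability
`1 / (S + 1)`, so probabilities become counts of labellings. -/
def labelGraph {S : ℕ} (ω : Sym2 V → Fin (S + 1)) : SimpleGraph V :=
  fromEdgeSet {e | ω e = 0}

theorem labelGraph_adj {S : ℕ} {ω : Sym2 V → Fin (S + 1)} {v w : V} :
    (labelGraph ω).Adj v w ↔ ω s(v, w) = 0 ∧ v ≠ w :=
  fromEdgeSet_adj _

section RandomGraph

open scoped Classical

variable [Fintype V] {S : ℕ}

theorem card_filter_isCopy_labelGraph_mul_le (F : SimpleGraph W) [Fintype W] [Fintype F.edgeSet]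
    (f : W → V) :
    #{ω : Sym2 V → Fin (S + 1) | Injective f ∧
        ∀ a b, F.Adj a b → (labelGraph ω).Adj (f a) (f b)} * (S + 1) ^ #F.edgeFinset ≤
      (S + 1) ^ Fintype.card (Sym2 V) := by
  by_cases hf : Injective f
  · have key := card_filter_mul_pow_le (Q := fun ω : Sym2 V → Fin (S + 1) => Injective f ∧
        ∀ a b, F.Adj a b → (labelGraph ω).Adj (f a) (f b))
      (F.edgeFinset.map ⟨Sym2.map f, Sym2.map.injective hf⟩) {0} ?_
    · simpa using key
    rintro ω ⟨-, hω⟩ e he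
    obtain ⟨e, heF, rfl⟩ := mem_map.1 he
    induction e using Sym2.ind with
    | _ a b => exact mem_singleton.2 (labelGraph_adj.1 (hω a b (mem_edgeFinset.1 heF))).1
  · simp [hf]

theorem sum_labelledCopyCount_labelGraph_mul_le (F : SimpleGraph W) [Fintype W]
    [Fintype F.edgeSet] :
    (∑ ω : Sym2 V → Fin (S + 1), (labelGraph ω).labelledCopyCount F) *
        (S + 1) ^ #F.edgeFinset ≤
      Fintype.card V ^ Fintype.card W * (S + 1) ^ Fintype.card (Sym2 V) := by
  simp_rw [labelledCopyCount_eq_card_filter, card_filter]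
  rw [sum_comm, sum_mul]
  calc _ ≤ ∑ _f : W → V, (S + 1) ^ Fintype.card (Sym2 V) := sum_le_sum fun f _ => by
          simpa only [card_filter] using card_filter_isCopy_labelGraph_mul_le F f
    _ = _ := by rw [sum_const, card_univ, Fintype.card_fun, smul_eq_mul]

theorem card_filter_complete_labelGraph_mul_le {A B : Finset V} (hAB : Disjoint A B) :
    #{ω : Sym2 V → Fin (S + 1) | ∀ a ∈ A, ∀ b ∈ B, (labelGraph ω).Adj a b} *
        (S + 1) ^ (#A * #B) ≤ (S + 1) ^ Fintype.card (Sym2 V) := by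
  have key := card_filter_mul_pow_le
    (Q := fun ω : Sym2 V → Fin (S + 1) => ∀ a ∈ A, ∀ b ∈ B, (labelGraph ω).Adj a b)
    ((A ×ˢ B).image fun ab => s(ab.1, ab.2)) {0} fun ω hω e he => by
      obtain ⟨⟨a, b⟩, hab, rfl⟩ := mem_image.1 he
      obtain ⟨ha, hb⟩ := mem_product.1 hab
      exact mem_singleton.2 (labelGraph_adj.1 (hω a ha b hb)).1
  rwa [card_image_sym2Mk_product hAB, card_singleton, one_pow, one_mul, Fintype.card_fin] at key

theorem card_filter_anticomplete_labelGraph_mul_le {A B : Finset V} (hAB : Disjoint A B) :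
    #{ω : Sym2 V → Fin (S + 1) | ∀ a ∈ A, ∀ b ∈ B, ¬ (labelGraph ω).Adj a b} *
        (S + 1) ^ (#A * #B) ≤ S ^ (#A * #B) * (S + 1) ^ Fintype.card (Sym2 V) := by
  have key := card_filter_mul_pow_le
    (Q := fun ω : Sym2 V → Fin (S + 1) => ∀ a ∈ A, ∀ b ∈ B, ¬ (labelGraph ω).Adj a b)
    ((A ×ˢ B).image fun ab => s(ab.1, ab.2)) {0}ᶜ fun ω hω e he => by
      obtain ⟨⟨a, b⟩, hab, rfl⟩ := mem_image.1 he
      obtain ⟨ha, hb⟩ := mem_product.1 hab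
      have hne : a ≠ b := fun h => Finset.disjoint_left.1 hAB ha (h ▸ hb)
      exact mem_compl.2 fun h0 => hω a ha b hb (labelGraph_adj.2 ⟨mem_singleton.1 h0, hne⟩)
  rwa [card_image_sym2Mk_product hAB, card_compl, card_singleton, Fintype.card_fin,
    Nat.add_sub_cancel] at key

theorem card_filter_isHomogeneousPair_labelGraph_mul_le (hS : 0 < S) {A B : Finset V}
    (hAB : Disjoint A B) :
    #{ω : Sym2 V → Fin (S + 1) | (labelGraph ω).IsHomogeneousPair A B} * (S + 1) ^ (#A * #B) ≤
      2 * S ^ (#A * #B) * (S + 1) ^ Fintype.card (Sym2 V) := by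
  have hunion : #{ω : Sym2 V → Fin (S + 1) | (labelGraph ω).IsHomogeneousPair A B} ≤
      #{ω : Sym2 V → Fin (S + 1) | ∀ a ∈ A, ∀ b ∈ B, (labelGraph ω).Adj a b} +
        #{ω : Sym2 V → Fin (S + 1) | ∀ a ∈ A, ∀ b ∈ B, ¬ (labelGraph ω).Adj a b} := by
    refine (card_le_card fun ω hω => ?_).trans (card_union_le _ _)
    simp only [mem_union, mem_filter, mem_univ, true_and]
    exact (mem_filter.1 hω).2
  replace hunion := Nat.mul_le_mul_right ((S + 1) ^ (#A * #B)) hunion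
  have hcomplete := card_filter_complete_labelGraph_mul_le (S := S) hAB
  have hanti := card_filter_anticomplete_labelGraph_mul_le (S := S) hAB
  have hS' := Nat.mul_le_mul_right ((S + 1) ^ Fintype.card (Sym2 V))
    (Nat.one_le_pow (#A * #B) _ hS)
  linarith

theorem two_mul_card_filter_le_labelledCopyCount (F : SimpleGraph W) [Fintype W]
    [Fintype F.edgeSet] (hS : 0 < S)
    (hcopies : 2 * Fintype.card V ^ Fintype.card W ≤ S * (S + 1) ^ #F.edgeFinset) :
    2 * #{ω : Sym2 V → Fin (S + 1) | S ≤ (labelGraph ω).labelledCopyCount F} ≤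
      (S + 1) ^ Fintype.card (Sym2 V) := by
  set bad : Finset _ := {ω : Sym2 V → Fin (S + 1) | S ≤ (labelGraph ω).labelledCopyCount F}
  have hmarkov :
      #bad * S ≤ ∑ ω : Sym2 V → Fin (S + 1), (labelGraph ω).labelledCopyCount F :=
    calc #bad * S = #bad • S := rfl
      _ ≤ ∑ ω ∈ bad, (labelGraph ω).labelledCopyCount F :=
        card_nsmul_le_sum _ _ _ fun ω hω => (mem_filter.1 hω).2
      _ ≤ _ := sum_le_sum_of_subset (subset_univ _)
  have hexp := sum_labelledCopyCount_labelGraph_mul_le (V := V) (S := S) F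
  refine Nat.le_of_mul_le_mul_right (c := S * (S + 1) ^ #F.edgeFinset) ?_ (by positivity)
  calc 2 * #bad * (S * (S + 1) ^ #F.edgeFinset)
      = 2 * (#bad * S * (S + 1) ^ #F.edgeFinset) := by ring
    _ ≤ 2 * (Fintype.card V ^ Fintype.card W * (S + 1) ^ Fintype.card (Sym2 V)) :=
      Nat.mul_le_mul_left _ ((Nat.mul_le_mul_right _ hmarkov).trans hexp)
    _ ≤ S * (S + 1) ^ #F.edgeFinset * (S + 1) ^ Fintype.card (Sym2 V) := by
      rw [← mul_assoc]; exact Nat.mul_le_mul_right _ hcopies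
    _ = _ := mul_comm _ _

theorem two_mul_card_filter_hasHomogeneousPair_lt {r : ℕ} (hS : 0 < S)
    (hpairs : 4 * 4 ^ Fintype.card V * S ^ (r * r) < (S + 1) ^ (r * r)) :
    2 * #{ω : Sym2 V → Fin (S + 1) | (labelGraph ω).HasHomogeneousPair r} <
      (S + 1) ^ Fintype.card (Sym2 V) := by
  set M := Fintype.card (Sym2 V)
  let event (AB : Finset V × Finset V) : Finset (Sym2 V → Fin (S + 1)) :=
    {ω | Disjoint AB.1 AB.2 ∧ #AB.1 = r ∧ #AB.2 = r ∧
      (labelGraph ω).IsHomogeneousPair AB.1 AB.2}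
  have hunion : #{ω : Sym2 V → Fin (S + 1) | (labelGraph ω).HasHomogeneousPair r} ≤
      ∑ AB, #(event AB) := by
    refine (card_le_card fun ω hω => ?_).trans card_biUnion_le
    obtain ⟨A, B, h⟩ := (mem_filter.1 hω).2.exists_card_eq
    exact mem_biUnion.2 ⟨(A, B), mem_univ _, mem_filter.2 ⟨mem_univ _, h⟩⟩
  have hevent : ∀ AB, #(event AB) * (S + 1) ^ (r * r) ≤ 2 * S ^ (r * r) * (S + 1) ^ M := by
    rintro ⟨A, B⟩
    by_cases hAB : Disjoint A B ∧ #A = r ∧ #B = r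
    · obtain ⟨hAB, rfl, hB⟩ := hAB
      have := card_filter_isHomogeneousPair_labelGraph_mul_le (S := S) hS hAB
      rw [hB] at this
      convert this using 4
      simp [hAB, hB]
    · have : event (A, B) = ∅ := filter_false_of_mem fun ω _ h => hAB ⟨h.1, h.2.1, h.2.2.1⟩
      simp [this]
  have hcount : Fintype.card (Finset V × Finset V) = 4 ^ Fintype.card V := by
    rw [Fintype.card_prod, Fintype.card_finset, ← mul_pow]
    norm_num
  refine Nat.lt_of_mul_lt_mul_right (a := (S + 1) ^ (r * r)) ?_
  calc 2 * #{ω : Sym2 V → Fin (S + 1) | (labelGraph ω).HasHomogeneousPair r} * (S + 1) ^ (r * r)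
      ≤ 2 * ∑ AB, #(event AB) * (S + 1) ^ (r * r) := by
        rw [← sum_mul, ← mul_assoc]; exact Nat.mul_le_mul_right _ (Nat.mul_le_mul_left _ hunion)
    _ ≤ 2 * ∑ _AB : Finset V × Finset V, 2 * S ^ (r * r) * (S + 1) ^ M :=
        Nat.mul_le_mul_left _ (sum_le_sum fun AB _ => hevent AB)
    _ = 4 * 4 ^ Fintype.card V * S ^ (r * r) * (S + 1) ^ M := by
        rw [sum_const, card_univ, hcount, smul_eq_mul]; ring
    _ < (S + 1) ^ (r * r) * (S + 1) ^ M := Nat.mul_lt_mul_of_pos_right hpairs (by positivity)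
    _ = _ := mul_comm _ _

theorem exists_labelGraph_labelledCopyCount_lt_not_hasHomogeneousPair (F : SimpleGraph W)
    [Fintype W] [Fintype F.edgeSet] {r : ℕ} (hS : 0 < S)
    (hcopies : 2 * Fintype.card V ^ Fintype.card W ≤ S * (S + 1) ^ #F.edgeFinset)
    (hpairs : 4 * 4 ^ Fintype.card V * S ^ (r * r) < (S + 1) ^ (r * r)) :
    ∃ ω : Sym2 V → Fin (S + 1),
      (labelGraph ω).labelledCopyCount F < S ∧ ¬ (labelGraph ω).HasHomogeneousPair r := by
  set bad₁ : Finset (Sym2 V → Fin (S + 1)) := {ω | S ≤ (labelGraph ω).labelledCopyCount F}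
  set bad₂ : Finset (Sym2 V → Fin (S + 1)) := {ω | (labelGraph ω).HasHomogeneousPair r}
  have h₁ : 2 * #bad₁ ≤ _ := two_mul_card_filter_le_labelledCopyCount F hS hcopies
  have h₂ : 2 * #bad₂ < _ := two_mul_card_filter_hasHomogeneousPair_lt hS hpairs
  have h₁₂ := card_union_le bad₁ bad₂
  obtain ⟨ω, -, hω⟩ := exists_mem_notMem_of_card_lt_card (s := bad₁ ∪ bad₂) (t := univ)
    (by rw [card_univ, Fintype.card_fun, Fintype.card_fin]; omega)
  simp only [bad₁, bad₂, mem_union, mem_filter, mem_univ, true_and, not_or, not_le] at hω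
  exact ⟨ω, hω⟩

end RandomGraph

theorem exists_free_not_hasHomogeneousPair (F : SimpleGraph W) [Fintype W] [Nonempty W]
    [Fintype F.edgeSet] (hF : Fintype.card W ≤ #F.edgeFinset) {m : ℕ} (hm : 0 < m) :
    ∃ (N r : ℕ) (G : SimpleGraph (Fin N)),
      2 ≤ N ∧ m * r ≤ N ∧ F.Free G ∧ ¬ G.HasHomogeneousPair r := by
  set S := 2 * (16 * m ^ 2) ^ Fintype.card W with hSdef
  set r := 8 * m * S
  have hS : 2 ≤ S := le_mul_of_one_le_right (by norm_num) (Nat.one_le_pow _ _ (by positivity))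
  have hSmr : S ≤ m * r :=
    calc S ≤ 8 * m * m * S := Nat.le_mul_of_pos_left S (by positivity)
      _ = m * r := by ring
  have hcopies : 2 * Fintype.card (Fin (2 * (m * r))) ^ Fintype.card W ≤
      S * (S + 1) ^ #F.edgeFinset := by
    rw [Fintype.card_fin, show 2 * (m * r) = 16 * m ^ 2 * S by ring, mul_pow]
    calc 2 * ((16 * m ^ 2) ^ Fintype.card W * S ^ Fintype.card W)
        = S * S ^ Fintype.card W := by rw [hSdef]; ring
      _ ≤ S * (S + 1) ^ #F.edgeFinset :=
        Nat.mul_le_mul_left _ ((Nat.pow_le_pow_left (Nat.le_succ S) _).trans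
          (Nat.pow_le_pow_right (Nat.succ_pos S) hF))
  have hpairs : 4 * 4 ^ Fintype.card (Fin (2 * (m * r))) * S ^ (r * r) < (S + 1) ^ (r * r) := by
    rw [Fintype.card_fin, show r * r = S * (8 * (m * r)) by ring]
    exact four_mul_four_pow_mul_pow_lt (by omega) (by omega)
  obtain ⟨ω, hfew, hhom⟩ :=
    exists_labelGraph_labelledCopyCount_lt_not_hasHomogeneousPair F (by omega) hcopies hpairs
  obtain ⟨N, e, hN, hfree⟩ := exists_free_comap_card_le_add_labelledCopyCount (labelGraph ω) F
  rw [Fintype.card_fin] at hN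
  exact ⟨N, r, _, by omega, by omega, hfree,
    fun h => hhom (h.of_embedding (Embedding.comap e _))⟩

end SimpleGraph

open SimpleGraph

theorem StrongEH.anti {I J : Set GraphOn} (hJI : J ⊆ I) (h : StrongEH I) : StrongEH J :=
  let ⟨ε, hε, hI⟩ := h
  ⟨ε, hε, fun G hG => hI G (hJI hG)⟩

theorem Embeds.isContained {H G : GraphOn} (h : Embeds H G) : H.2 ⊑ G.2 :=
  let ⟨f, hf, hadj⟩ := h
  Embedding.isContained ⟨⟨f, hf⟩, fun {a b} => (hadj a b).symm⟩

theorem not_strongEH_free {W : Type*} (F : SimpleGraph W) [Fintype W] [Nonempty W]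
    [Fintype F.edgeSet] (hF : Fintype.card W ≤ #F.edgeFinset) :
    ¬ StrongEH {G : GraphOn | F.Free G.2} := by
  rintro ⟨ε, hε, hEH⟩
  set m := ⌈ε⁻¹⌉₊
  have hεm : 1 ≤ ε * m := by
    rw [← inv_le_iff_one_le_mul₀' hε]
    exact Nat.le_ceil _
  obtain ⟨N, r, G, hN, hmr, hfree, hG⟩ :=
    exists_free_not_hasHomogeneousPair F hF (Nat.ceil_pos.2 (inv_pos.2 hε))
  have hr : ∀ C : Finset (Fin N), ε * N ≤ #C → r ≤ #C := fun C hC => by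
    have : (r : ℝ) ≤ ε * N :=
      calc (r : ℝ) ≤ ε * m * r := le_mul_of_one_le_left (Nat.cast_nonneg _) hεm
        _ ≤ ε * N := by rw [mul_assoc]; gcongr; exact_mod_cast hmr
    exact_mod_cast this.trans hC
  obtain ⟨A, B, hAB, hA, hB, hhom⟩ := hEH ⟨N, G⟩ hfree hN
  exact hG ⟨A, B, hAB, hr A hA, hr B hB, hhom⟩

theorem stmt_14 (H : GraphOn)
    (hEH : StrongEH {G : GraphOn | ¬ Embeds H G}) : H.2.IsAcyclic := by
  intro v p hp
  obtain ⟨k, hk⟩ : ∃ k, p.length = k + 3 :=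
    ⟨p.length - 3, by have := hp.three_le_length; omega⟩
  have hCH : cycleGraph (k + 3) ⊑ H.2 :=
    (cycleGraph_isContained_iff (by omega)).2 ⟨v, p, hp, hk⟩
  refine not_strongEH_free (cycleGraph (k + 3)) (by simp [card_edgeFinset_cycleGraph])
    (hEH.anti ?_)
  exact fun G hG hHG => hG (hCH.trans hHG.isContained)
end

section
/- If an ideal 𝓘 of graphs has the strong Erdős–Hajnal property with constant ε, then it has the Erdős–Hajnal property: there exists c > 0 such that every G ∈ 𝓘 has a clique or stable set of size at least |G|^c. -/
/-- An ideal: a class of finite graphs closed under (isomorphism and) induced subgraphs. -/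
def IsIdeal (I : Set GraphOn) : Prop :=
  ∀ G ∈ I, ∀ H : GraphOn, Embeds H G → H ∈ I

/-- The clique number ω(G). -/
noncomputable def gOmega (G : GraphOn) : ℕ :=
  sSup {k | ∃ s : Finset (Fin G.1), G.2.IsNClique k s}

/-- The independence number α(G). -/
noncomputable def gAlpha (G : GraphOn) : ℕ :=
  sSup {k | ∃ s : Finset (Fin G.1), G.2ᶜ.IsNClique k s}

/-! The induction runs on the product ω(G)·α(G) rather than on ω and α separately. Shrink the
strong Erdős–Hajnal constant ε to at most 1/2 and pick c > 0 with ε^c = 1/2. Take the two sets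
A, B of size at least ε|G|. If they are complete, a maximum clique of G[A] and one of G[B]
together form a clique, and α(G) ≥ α(G[A]), α(G[B]). Hence
ω(G)α(G) ≥ ω(G[A])α(G[A]) + ω(G[B])α(G[B]) ≥ |A|^c + |B|^c ≥ 2(ε|G|)^c = |G|^c.
The anticomplete case is the same argument in the complement. So max(ω, α) ≥ |G|^(c/2). -/

open Finset SimpleGraph

namespace SimpleGraph

variable {α β γ : Type*} {G : SimpleGraph α} {H : SimpleGraph β} {K : SimpleGraph γ}

lemma IsClique.finsetMap_embedding {s : Finset β} (hs : H.IsClique s) (f : H ↪g G) :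
    G.IsClique (s.map f.toEmbedding) := by
  rw [IsClique, coe_map, f.toEmbedding.injective.injOn.pairwise_image]
  exact fun x hx y hy hxy => f.map_adj_iff.2 (hs hx hy hxy)

lemma Embedding.cliqueNum_le [Finite α] (f : H ↪g G) : H.cliqueNum ≤ G.cliqueNum := by
  obtain ⟨s, hs⟩ := H.exists_isNClique_cliqueNum
  rw [← hs.card_eq, ← card_map f.toEmbedding]
  exact IsClique.card_le_cliqueNum (tc := hs.isClique.finsetMap_embedding f)

lemma Embedding.indepNum_le [Finite α] (f : H ↪g G) : H.indepNum ≤ G.indepNum := by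
  simpa using (Embedding.complEquiv f).cliqueNum_le

lemma one_le_cliqueNum [Finite α] [Nonempty α] : 1 ≤ G.cliqueNum := by
  simpa using IsClique.card_le_cliqueNum (G := G) (t := {Classical.arbitrary α}) (tc := by simp)

lemma one_le_indepNum [Finite α] [Nonempty α] : 1 ≤ G.indepNum := by
  simpa using (Gᶜ).one_le_cliqueNum

lemma cliqueNum_add_cliqueNum_le [Finite α] (f : H ↪g G) (g : K ↪g G)
    (hadj : ∀ x y, G.Adj (f x) (g y)) : H.cliqueNum + K.cliqueNum ≤ G.cliqueNum := by
  classical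
  obtain ⟨s, hs⟩ := H.exists_isNClique_cliqueNum
  obtain ⟨t, ht⟩ := K.exists_isNClique_cliqueNum
  have hdisj : Disjoint (s.map f.toEmbedding) (t.map g.toEmbedding) := by
    simp only [Finset.disjoint_left, mem_map]
    rintro _ ⟨x, -, rfl⟩ ⟨y, -, hyx⟩
    exact (hadj x y).ne hyx.symm
  have hclique : G.IsClique ↑(s.map f.toEmbedding ∪ t.map g.toEmbedding) := by
    rw [IsClique, coe_union, Set.pairwise_union]
    refine ⟨hs.isClique.finsetMap_embedding f, ht.isClique.finsetMap_embedding g, ?_⟩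
    simp only [mem_coe, mem_map]
    rintro _ ⟨x, -, rfl⟩ _ ⟨y, -, rfl⟩ -
    exact ⟨hadj x y, (hadj x y).symm⟩
  rw [← hs.card_eq, ← ht.card_eq, ← card_map f.toEmbedding, ← card_map g.toEmbedding,
    ← card_union_of_disjoint hdisj]
  exact IsClique.card_le_cliqueNum (tc := hclique)

lemma cliqueNum_mul_indepNum_add_le_of_adj [Finite α] (f : H ↪g G) (g : K ↪g G)
    (hadj : ∀ x y, G.Adj (f x) (g y)) :
    H.cliqueNum * H.indepNum + K.cliqueNum * K.indepNum ≤ G.cliqueNum * G.indepNum :=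
  calc H.cliqueNum * H.indepNum + K.cliqueNum * K.indepNum
      ≤ H.cliqueNum * G.indepNum + K.cliqueNum * G.indepNum := by
        gcongr
        exacts [f.indepNum_le, g.indepNum_le]
    _ = (H.cliqueNum + K.cliqueNum) * G.indepNum := (add_mul _ _ _).symm
    _ ≤ G.cliqueNum * G.indepNum := by gcongr; exact cliqueNum_add_cliqueNum_le f g hadj

lemma cliqueNum_mul_indepNum_add_le [Finite α] (f : H ↪g G) (g : K ↪g G)
    (hne : ∀ x y, f x ≠ g y)
    (hadj : (∀ x y, G.Adj (f x) (g y)) ∨ ∀ x y, ¬ G.Adj (f x) (g y)) :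
    H.cliqueNum * H.indepNum + K.cliqueNum * K.indepNum ≤ G.cliqueNum * G.indepNum := by
  rcases hadj with hadj | hnadj
  · exact cliqueNum_mul_indepNum_add_le_of_adj f g hadj
  · have := cliqueNum_mul_indepNum_add_le_of_adj (Embedding.complEquiv f)
      (Embedding.complEquiv g) fun x y => (compl_adj G _ _).2 ⟨hne x y, hnadj x y⟩
    simpa only [cliqueNum_compl, indepNum_compl, mul_comm] using this

lemma rpow_le_cliqueNum_mul_indepNum_of_lt_two {n : ℕ} (hn : n < 2)
    (G : SimpleGraph (Fin n)) {c : ℝ} (hc : 0 < c) :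
    (n : ℝ) ^ c ≤ G.cliqueNum * G.indepNum := by
  interval_cases n
  · simp only [CharP.cast_eq_zero, Real.zero_rpow hc.ne']
    positivity
  · simp only [Nat.cast_one, Real.one_rpow]
    exact_mod_cast Nat.mul_le_mul G.one_le_cliqueNum G.one_le_indepNum

end SimpleGraph

namespace Real

lemma exists_pos_rpow_eq_half {ε : ℝ} (h₀ : 0 < ε) (h₁ : ε < 1) :
    ∃ c : ℝ, 0 < c ∧ ε ^ c = 1 / 2 :=
  ⟨logb ε (1 / 2), logb_pos_of_base_lt_one h₀ h₁ (by norm_num) (by norm_num),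
    rpow_logb h₀ h₁.ne (by norm_num)⟩

lemma rpow_le_rpow_add_rpow {ε c x a b : ℝ} (hε : 0 ≤ ε) (hx : 0 ≤ x) (hc : 0 ≤ c)
    (hεc : ε ^ c = 1 / 2) (ha : ε * x ≤ a) (hb : ε * x ≤ b) : x ^ c ≤ a ^ c + b ^ c :=
  calc x ^ c = (ε * x) ^ c + (ε * x) ^ c := by rw [mul_rpow hε hx, hεc]; ring
    _ ≤ a ^ c + b ^ c := by gcongr

lemma rpow_half_le_max_of_rpow_le_mul {x c a b : ℝ} (hx : 0 ≤ x) (ha : 0 ≤ a) (hb : 0 ≤ b)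
    (h : x ^ c ≤ a * b) : x ^ (c / 2) ≤ max a b := by
  have hmax : 0 ≤ max a b := ha.trans (le_max_left a b)
  refine (pow_le_pow_iff_left₀ (by positivity) hmax two_ne_zero).1 ?_
  calc (x ^ (c / 2)) ^ 2 = x ^ c := by rw [← rpow_mul_natCast hx]; norm_num
    _ ≤ a * b := h
    _ ≤ max a b ^ 2 := by rw [sq]; exact mul_le_mul (le_max_left a b) (le_max_right a b) hb hmax

end Real

namespace GraphOn

lemma gOmega_eq (G : GraphOn) : gOmega G = G.2.cliqueNum := rfl

lemma gAlpha_eq (G : GraphOn) : gAlpha G = G.2.indepNum := G.2.cliqueNum_compl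

lemma embeds_of_embedding {H G : GraphOn} (f : H.2 ↪g G.2) : Embeds H G :=
  ⟨f, f.injective, fun _ _ => f.map_adj_iff.symm⟩

noncomputable def finsetEmbedding {n : ℕ} (A : Finset (Fin n)) : Fin #A ↪ Fin n :=
  A.equivFin.symm.toEmbedding.trans (Function.Embedding.subtype _)

lemma finsetEmbedding_mem {n : ℕ} (A : Finset (Fin n)) (i : Fin #A) :
    finsetEmbedding A i ∈ A :=
  (A.equivFin.symm i).2

noncomputable def induce (G : GraphOn) (A : Finset (Fin G.1)) : GraphOn :=
  ⟨#A, G.2.comap (finsetEmbedding A)⟩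

noncomputable def induceEmbedding (G : GraphOn) (A : Finset (Fin G.1)) :
    (G.induce A).2 ↪g G.2 :=
  Embedding.comap (finsetEmbedding A) G.2

lemma cliqueNum_mul_indepNum_induce_add_le (G : GraphOn) {A B : Finset (Fin G.1)}
    (hAB : Disjoint A B)
    (hadj : (∀ a ∈ A, ∀ b ∈ B, G.2.Adj a b) ∨ ∀ a ∈ A, ∀ b ∈ B, ¬ G.2.Adj a b) :
    (G.induce A).2.cliqueNum * (G.induce A).2.indepNum
        + (G.induce B).2.cliqueNum * (G.induce B).2.indepNum
      ≤ G.2.cliqueNum * G.2.indepNum := by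
  have hA := finsetEmbedding_mem A
  have hB := finsetEmbedding_mem B
  refine cliqueNum_mul_indepNum_add_le (G.induceEmbedding A) (G.induceEmbedding B)
    (fun x y hxy => disjoint_left.1 hAB (hA x) (hxy ▸ hB y)) ?_
  exact hadj.imp (fun h x y => h _ (hA x) _ (hB y)) (fun h x y => h _ (hA x) _ (hB y))

end GraphOn

lemma IsIdeal.induce_mem {I : Set GraphOn} (hI : IsIdeal I) {G : GraphOn} (hG : G ∈ I)
    (A : Finset (Fin G.1)) : G.induce A ∈ I :=
  hI G hG _ (GraphOn.embeds_of_embedding (G.induceEmbedding A))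

def StrongEHWith (ε : ℝ) (I : Set GraphOn) : Prop :=
  ∀ G ∈ I, 2 ≤ G.1 →
    ∃ A B : Finset (Fin G.1), Disjoint A B ∧
      ε * (G.1 : ℝ) ≤ A.card ∧ ε * (G.1 : ℝ) ≤ B.card ∧
      ((∀ a ∈ A, ∀ b ∈ B, G.2.Adj a b) ∨ (∀ a ∈ A, ∀ b ∈ B, ¬ G.2.Adj a b))

lemma strongEH_iff {I : Set GraphOn} : StrongEH I ↔ ∃ ε, 0 < ε ∧ StrongEHWith ε I :=
  Iff.rfl

lemma StrongEHWith.mono {I : Set GraphOn} {ε ε' : ℝ} (h : ε' ≤ ε) (hI : StrongEHWith ε I) :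
    StrongEHWith ε' I := by
  intro G hG hG2
  obtain ⟨A, B, hAB, hA, hB, hadj⟩ := hI G hG hG2
  have hε : ε' * G.1 ≤ ε * G.1 := by gcongr
  exact ⟨A, B, hAB, hε.trans hA, hε.trans hB, hadj⟩

theorem IsIdeal.rpow_le_cliqueNum_mul_indepNum {I : Set GraphOn} {ε c : ℝ} (hI : IsIdeal I)
    (hε : 0 < ε) (hc : 0 < c) (hεc : ε ^ c = 1 / 2) (hEH : StrongEHWith ε I) :
    ∀ G ∈ I, (G.1 : ℝ) ^ c ≤ G.2.cliqueNum * G.2.indepNum := by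
  suffices ∀ n, ∀ G ∈ I, G.1 = n → (G.1 : ℝ) ^ c ≤ G.2.cliqueNum * G.2.indepNum from
    fun G hG => this _ G hG rfl
  intro n
  induction n using Nat.strong_induction_on with
  | _ n ih =>
  intro G hG hn
  obtain hG2 | hG2 := lt_or_ge G.1 2
  · exact SimpleGraph.rpow_le_cliqueNum_mul_indepNum_of_lt_two hG2 G.2 hc
  obtain ⟨A, B, hAB, hA, hB, hadj⟩ := hEH G hG hG2
  have hεn : 0 < ε * G.1 := mul_pos hε (by positivity)
  have hcard : #A + #B ≤ G.1 := by
    simpa [← card_union_of_disjoint hAB] using card_le_univ (A ∪ B)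
  have hApos : 0 < #A := by exact_mod_cast hεn.trans_le hA
  have hBpos : 0 < #B := by exact_mod_cast hεn.trans_le hB
  have ihA := ih #A (by omega) _ (hI.induce_mem hG A) rfl
  have ihB := ih #B (by omega) _ (hI.induce_mem hG B) rfl
  have hsplit := GraphOn.cliqueNum_mul_indepNum_induce_add_le G hAB hadj
  calc (G.1 : ℝ) ^ c ≤ (#A : ℝ) ^ c + (#B : ℝ) ^ c :=
        Real.rpow_le_rpow_add_rpow hε.le (Nat.cast_nonneg _) hc.le hεc hA hB
    _ ≤ _ := add_le_add ihA ihB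
    _ ≤ _ := by exact_mod_cast hsplit

theorem stmt_15 (I : Set GraphOn) (hI : IsIdeal I) (hEH : StrongEH I) :
    ∃ c : ℝ, 0 < c ∧ ∀ G ∈ I, (G.1 : ℝ) ^ c ≤ (max (gOmega G) (gAlpha G) : ℕ) := by
  obtain ⟨ε, hε, hEH⟩ := strongEH_iff.1 hEH
  set ε' := min ε (1 / 2)
  have hε' : 0 < ε' := lt_min hε one_half_pos
  obtain ⟨c, hc, hεc⟩ := Real.exists_pos_rpow_eq_half hε' (min_lt_of_right_lt one_half_lt_one)
  refine ⟨c / 2, half_pos hc, fun G hG => ?_⟩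
  have h := hI.rpow_le_cliqueNum_mul_indepNum hε' hc hεc (hEH.mono (min_le_left _ _)) G hG
  rw [GraphOn.gOmega_eq, GraphOn.gAlpha_eq, Nat.cast_max]
  exact Real.rpow_half_le_max_of_rpow_le_mul (Nat.cast_nonneg _) (Nat.cast_nonneg _)
    (Nat.cast_nonneg _) h
end

section
/- Let G be a finite graph, μ a mass on G, and let X₁,…,X_n be the vertex sets of the connected components of G[Y] for some Y ⊆ V(G). If (G, μ) is ε-coherent and μ(Y) ≥ 3ε, then there exists an index i with μ(X_i) ≥ ε and μ(Y ∖ X_i) < ε. -/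
open scoped Classical

/-- `A` covers `B`: every vertex of `B` has a neighbour in `A`. -/
def Covers {V : Type*} (G : SimpleGraph V) (A B : Finset V) : Prop :=
  ∀ b ∈ B, ∃ a ∈ A, G.Adj a b

/-!
If some component `X` of `G[Y]` leaves mass `< ε` outside it, then
`μ X ≥ μ Y - μ (Y \ X) > ε` and `X` is the required component. Otherwise coherence, applied to
the anticomplete pair `X, Y \ X`, makes every component light (`μ X < ε`). Adding components one
at a time, the mass of the union first reaches `ε` at a union `U` with `μ U < 2ε`; then
`μ (Y \ U) > ε` as well, contradicting coherence for the anticomplete pair `U, Y \ U`.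
-/

section

variable {V : Type*}

namespace IsMass

variable [Fintype V] [DecidableEq V] {μ : Finset V → ℝ}

theorem union_le (hμ : IsMass μ) (A B : Finset V) : μ (A ∪ B) ≤ μ A + μ B := by
  obtain ⟨-, -, hmono, hsub⟩ := hμ
  calc μ (A ∪ B) = μ (A ∪ (B \ A)) := by rw [Finset.union_sdiff_self_eq_union]
    _ ≤ μ A + μ (B \ A) := hsub _ _ Finset.disjoint_sdiff
    _ ≤ μ A + μ B := by gcongr; exact hmono _ _ Finset.sdiff_subset

theorem le_add_sdiff_s17 (hμ : IsMass μ) (Y A : Finset V) : μ Y ≤ μ A + μ (Y \ A) :=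
  (hμ.2.2.1 _ _ le_sup_sdiff).trans (hμ.union_le _ _)

theorem exists_biUnion_mem_Ico {ι : Type*} [DecidableEq ι] (hμ : IsMass μ) {ε : ℝ}
    (hε : 0 < ε) {f : ι → Finset V} {s : Finset ι} (hf : ∀ i ∈ s, μ (f i) < ε)
    (hs : ε ≤ μ (s.biUnion f)) :
    ∃ t ⊆ s, ε ≤ μ (t.biUnion f) ∧ μ (t.biUnion f) < 2 * ε := by
  induction s using Finset.induction_on with
  | empty => simp only [Finset.biUnion_empty, hμ.1] at hs; linarith
  | insert i s hi ih =>
    by_cases hbig : ε ≤ μ (s.biUnion f)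
    · obtain ⟨t, hts, ht⟩ := ih (fun j hj => hf j (Finset.mem_insert_of_mem hj)) hbig
      exact ⟨t, hts.trans (Finset.subset_insert i s), ht⟩
    · refine ⟨insert i s, subset_rfl, hs, ?_⟩
      rw [Finset.biUnion_insert]
      linarith [hμ.union_le (f i) (s.biUnion f), hf i (Finset.mem_insert_self i s)]

end IsMass

theorem MassCoherent.lt_or_sdiff_lt [Fintype V] [DecidableEq V] {G : SimpleGraph V}
    {μ : Finset V → ℝ} {ε : ℝ} (hcoh : MassCoherent G μ ε) {A : Finset V} (Y : Finset V)
    (hA : Anticomplete G A (Y \ A)) : μ A < ε ∨ μ (Y \ A) < ε :=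
  min_lt_iff.mp (hcoh.2.2 A (Y \ A) Finset.disjoint_sdiff hA)

theorem Anticomplete.biUnion_sdiff {ι : Type*} [DecidableEq V] {G : SimpleGraph V}
    {Y : Finset V} {f : ι → Finset V} {t : Finset ι}
    (hf : ∀ i ∈ t, Anticomplete G (f i) (Y \ f i)) :
    Anticomplete G (t.biUnion f) (Y \ t.biUnion f) := by
  intro a ha b hb
  obtain ⟨i, hi, hai⟩ := Finset.mem_biUnion.mp ha
  obtain ⟨hbY, hbU⟩ := Finset.mem_sdiff.mp hb
  refine hf i hi a hai b (Finset.mem_sdiff.mpr ⟨hbY, fun hbi => hbU ?_⟩)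
  exact Finset.mem_biUnion.mpr ⟨i, hi, hbi⟩

namespace SimpleGraph

variable (G : SimpleGraph V) (Y : Finset V)

/-- The vertex set of the component of `G[Y]` containing `v` (empty when `v ∉ Y`), described
as the union of all connected subsets of `Y` through `v`. -/
noncomputable def componentIn (v : V) : Finset V :=
  Y.filter fun w => ∃ s ⊆ (Y : Set V), v ∈ s ∧ w ∈ s ∧ (G.induce s).Connected

variable {G Y}

theorem mem_componentIn {v w : V} :
    w ∈ G.componentIn Y v ↔ ∃ s ⊆ (Y : Set V), v ∈ s ∧ w ∈ s ∧ (G.induce s).Connected :=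
  Finset.mem_filter.trans
    ⟨And.right, fun ⟨s, hsY, hv, hw, hs⟩ => ⟨hsY hw, s, hsY, hv, hw, hs⟩⟩

theorem componentIn_subset (v : V) : G.componentIn Y v ⊆ Y :=
  Finset.filter_subset _ _

theorem mem_componentIn_self {v : V} (hv : v ∈ Y) : v ∈ G.componentIn Y v := by
  refine mem_componentIn.mpr ⟨{v}, by simpa using hv, rfl, rfl, ?_⟩
  rw [induce_singleton_eq_top]
  exact connected_top

theorem connSub_componentIn {v : V} (hv : v ∈ Y) : ConnSub G (G.componentIn Y v) := by
  have hcoe : (G.componentIn Y v : Set V) =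
      ⋃₀ {s | s ⊆ (Y : Set V) ∧ v ∈ s ∧ (G.induce s).Connected} := by
    ext w
    simp only [Finset.mem_coe, mem_componentIn, Set.mem_sUnion, Set.mem_ofPred_eq]
    exact ⟨fun ⟨s, hsY, hvs, hws, hs⟩ => ⟨s, ⟨hsY, hvs, hs⟩, hws⟩,
      fun ⟨s, ⟨hsY, hvs, hs⟩, hws⟩ => ⟨s, hsY, hvs, hws, hs⟩⟩
  rw [ConnSub, hcoe]
  obtain ⟨s, hsY, hvs, -, hs⟩ := mem_componentIn.mp (mem_componentIn_self (G := G) hv)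
  exact induce_sUnion_connected_of_pairwise_not_disjoint ⟨s, hsY, hvs, hs⟩
    (fun hs ht => ⟨v, hs.2.1, ht.2.1⟩) (fun hs => hs.2.2)

/-- A neighbour in `Y` of a connected set through `v` extends it to a larger one. -/
theorem anticomplete_componentIn [DecidableEq V] (v : V) :
    Anticomplete G (G.componentIn Y v) (Y \ G.componentIn Y v) := by
  intro a ha b hb hab
  obtain ⟨hbY, hbC⟩ := Finset.mem_sdiff.mp hb
  obtain ⟨s, hsY, hvs, has, hs⟩ := mem_componentIn.mp ha
  refine hbC (mem_componentIn.mpr ⟨s ∪ {b}, ?_, Or.inl hvs, Or.inr rfl, ?_⟩)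
  · exact Set.union_subset hsY (Set.singleton_subset_iff.mpr hbY)
  · exact connected_induce_union hs.preconnected
      (by rw [induce_singleton_eq_top]; exact connected_top.preconnected) has rfl hab

theorem biUnion_componentIn [DecidableEq V] : Y.biUnion (G.componentIn Y) = Y :=
  Finset.Subset.antisymm (Finset.biUnion_subset.mpr fun v _ => componentIn_subset v)
    (fun v hv => Finset.mem_biUnion.mpr ⟨v, hv, mem_componentIn_self hv⟩)

end SimpleGraph

end

theorem stmt_17 {V : Type*} [Fintype V] [DecidableEq V] (G : SimpleGraph V)
    (μ : Finset V → ℝ) (hμ : IsMass μ) (ε : ℝ) (hε : 0 < ε)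
    (hcoh : MassCoherent G μ ε) (Y : Finset V) (hY : 3 * ε ≤ μ Y) :
    ∃ X ⊆ Y, X.Nonempty ∧ ConnSub G X ∧ Anticomplete G X (Y \ X) ∧
      ε ≤ μ X ∧ μ (Y \ X) < ε := by
  by_cases hheavy : ∃ v ∈ Y, μ (Y \ G.componentIn Y v) < ε
  · obtain ⟨v, hv, hrest⟩ := hheavy
    refine ⟨G.componentIn Y v, G.componentIn_subset v, ⟨v, G.mem_componentIn_self hv⟩,
      G.connSub_componentIn hv, G.anticomplete_componentIn v, ?_, hrest⟩
    linarith [hμ.le_add_sdiff_s17 Y (G.componentIn Y v)]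
  push Not at hheavy
  have hlight : ∀ v ∈ Y, μ (G.componentIn Y v) < ε := fun v hv =>
    (hcoh.lt_or_sdiff_lt Y (G.anticomplete_componentIn v)).resolve_right (hheavy v hv).not_gt
  obtain ⟨t, -, hlo, hhi⟩ := hμ.exists_biUnion_mem_Ico hε hlight
    (by rw [G.biUnion_componentIn]; linarith)
  have hsplit := hμ.le_add_sdiff_s17 Y (t.biUnion (G.componentIn Y))
  have hU := Anticomplete.biUnion_sdiff (t := t) fun v _ => G.anticomplete_componentIn (Y := Y) v
  rcases hcoh.lt_or_sdiff_lt Y hU with h | h <;> linarith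
end

section
/- Let T be a caterpillar and P a path of T containing all vertices of T of degree at least three (i.e., T is a caterpillar subdivision with spine P). Then every P-filleting of T contains an induced subgraph isomorphic to T. -/
/-!
Root `T` at the first vertex `x` of the spine `p` and send `u` to the vertex at distance
`dist_T(x, u)` from `x` on the subdivided `x`–`u` path of `J`. Spine edges are not subdivided,
so spine vertices stay in place. A vertex off the spine has at most one child, since with its
parent it would otherwise have three neighbours; so below such a vertex `T` is a path, which is
mapped onto an initial segment of its subdivision. Hence the map is a homomorphism, and locating
an image vertex, or an edge between images, on the subdivision of a single edge of `T` shows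
that it is injective and reflects adjacency.
-/

/-- `J` is a filleting of `H` relative to the edge set `Pe` (the edges of a path `P` of
`H`): `J` is obtained from `H` by subdividing, at least once, every edge of `H` not in
`Pe`, and not subdividing the edges in `Pe`.  This is expressed by a vertex embedding `f`
and, for every edge of `H`, an induced path (`route`) of `J` between the images of its
ends; edges in `Pe` keep length 1, edges outside `Pe` get length at least 2; internal
vertices of the routes are new and distinct for distinct edges; and the edges and
vertices of `J` are exactly those arising from the routes and from `f`. -/
def IsFilleting {α β : Type*} (H : SimpleGraph α) (Pe : Set (Sym2 α))
    (J : SimpleGraph β) : Prop :=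
  ∃ (f : α ↪ β) (route : ∀ ⦃u v : α⦄, H.Adj u v → J.Walk (f u) (f v)),
    (∀ (u v : α) (h : H.Adj u v), (route h).IsPath) ∧
    (∀ (u v : α) (h : H.Adj u v), route h.symm = (route h).reverse) ∧
    (∀ (u v : α) (h : H.Adj u v), s(u, v) ∈ Pe → (route h).length = 1) ∧
    (∀ (u v : α) (h : H.Adj u v), s(u, v) ∉ Pe → 2 ≤ (route h).length) ∧
    (∀ (u v : α) (h : H.Adj u v), ∀ w ∈ (route h).support,
      w ≠ f u → w ≠ f v → ∀ x : α, f x ≠ w) ∧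
    (∀ (u v x y : α) (h : H.Adj u v) (h' : H.Adj x y), s(u, v) ≠ s(x, y) →
      ∀ w ∈ (route h).support, w ≠ f u → w ≠ f v → w ∉ (route h').support) ∧
    (∀ a b : β, J.Adj a b → ∃ (u v : α) (h : H.Adj u v), s(a, b) ∈ (route h).edges) ∧
    (∀ b : β, (∃ x : α, f x = b) ∨ ∃ (u v : α) (h : H.Adj u v), b ∈ (route h).support)

/-- `v` has at least three neighbours in `T` (degree at least three). -/
def ThreeNbrs {α : Type*} (T : SimpleGraph α) (v : α) : Prop :=
  ∃ a b c : α, a ≠ b ∧ a ≠ c ∧ b ≠ c ∧ T.Adj v a ∧ T.Adj v b ∧ T.Adj v c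

namespace SimpleGraph.Walk

variable {α β : Type*} {G : SimpleGraph α} {H : SimpleGraph β} {f : α → β}
  (route : ∀ ⦃u v : α⦄, G.Adj u v → H.Walk (f u) (f v))

def expand : ∀ {a b : α}, G.Walk a b → H.Walk (f a) (f b)
  | _, _, nil => nil
  | _, _, cons h q => (route h).append (expand q)

@[simp] lemma expand_nil {a : α} : (nil : G.Walk a a).expand route = nil := rfl

@[simp] lemma expand_cons {a b c : α} (h : G.Adj a b) (q : G.Walk b c) :
    (cons h q).expand route = (route h).append (q.expand route) := rfl

lemma expand_append {a b c : α} (q₁ : G.Walk a b) (q₂ : G.Walk b c) :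
    (q₁.append q₂).expand route = (q₁.expand route).append (q₂.expand route) := by
  induction q₁ with
  | nil => rfl
  | cons h q ih => simp only [cons_append, expand_cons, ih, append_assoc]

lemma expand_concat {a b c : α} (q : G.Walk a b) (h : G.Adj b c) :
    (q.concat h).expand route = (q.expand route).append (route h) := by
  simp [concat_eq_append, expand_append]

lemma length_le_length_expand (hroute : ∀ ⦃u v : α⦄ (h : G.Adj u v), 1 ≤ (route h).length)
    {a b : α} (q : G.Walk a b) : q.length ≤ (q.expand route).length := by
  induction q with
  | nil => rfl
  | cons h q ih =>
    have := hroute h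
    simp only [expand_cons, length_append, length_cons]
    omega

lemma length_expand_of_forall_length_route_eq_one {a b : α} (q : G.Walk a b)
    (hq : ∀ ⦃u v : α⦄ (h : G.Adj u v), s(u, v) ∈ q.edges → (route h).length = 1) :
    (q.expand route).length = q.length := by
  induction q with
  | nil => rfl
  | cons h q ih =>
    simp only [expand_cons, length_append, length_cons, edges_cons, List.mem_cons] at hq ⊢
    rw [hq h (.inl rfl), ih fun u v h' he => hq h' (.inr he), add_comm]

lemma mem_support_expand {a b : α} {q : G.Walk a b} {w : β}
    (hw : w ∈ (q.expand route).support) :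
    w = f a ∨
      ∃ (c d : α) (h : G.Adj c d), s(c, d) ∈ q.edges ∧ w ∈ (route h).support := by
  induction q with
  | nil => simpa using hw
  | cons h q ih =>
    rw [expand_cons, mem_support_append_iff] at hw
    refine .inr ?_
    rcases hw with hw | hw
    · exact ⟨_, _, h, by simp, hw⟩
    · rcases ih hw with rfl | ⟨c, d, h', he, hw⟩
      · exact ⟨_, _, h, by simp, end_mem_support _⟩
      · exact ⟨c, d, h', by simp [he], hw⟩

end SimpleGraph.Walk

open SimpleGraph Walk

structure Subdivision {α β : Type*} (H : SimpleGraph α) (Pe : Set (Sym2 α))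
    (J : SimpleGraph β) where
  emb : α ↪ β
  route : ∀ ⦃u v : α⦄, H.Adj u v → J.Walk (emb u) (emb v)
  isPath_route ⦃u v : α⦄ (h : H.Adj u v) : (route h).IsPath
  route_symm ⦃u v : α⦄ (h : H.Adj u v) : route h.symm = (route h).reverse
  length_route_of_mem ⦃u v : α⦄ (h : H.Adj u v) : s(u, v) ∈ Pe → (route h).length = 1
  eq_or_eq_of_emb_mem ⦃u v : α⦄ (h : H.Adj u v) {z : α} :
    emb z ∈ (route h).support → z = u ∨ z = v
  eq_or_eq_of_mem_route ⦃u v u' v' : α⦄ (h : H.Adj u v) (h' : H.Adj u' v') {w : β} :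
    s(u, v) ≠ s(u', v') → w ∈ (route h).support → w ∈ (route h').support →
      w = emb u ∨ w = emb v
  exists_mem_edges_route ⦃a b : β⦄ :
    J.Adj a b → ∃ (u v : α) (h : H.Adj u v), s(a, b) ∈ (route h).edges

lemma IsFilleting.nonempty_subdivision {α β : Type*} {H : SimpleGraph α} {Pe : Set (Sym2 α)}
    {J : SimpleGraph β} (hJ : IsFilleting H Pe J) : Nonempty (Subdivision H Pe J) := by
  obtain ⟨f, route, h1, h2, h3, -, h5, h6, h7, -⟩ := hJ
  refine ⟨⟨f, route, h1, h2, h3, fun u v h z hz => ?_,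
    fun u v u' v' h h' w hne hw hw' => ?_, h7⟩⟩
  · by_contra! hne
    exact h5 u v h _ hz (f.injective.ne hne.1) (f.injective.ne hne.2) z rfl
  · by_contra! hw''
    exact h6 u v u' v' h h' hne w hw hw''.1 hw''.2 hw'

namespace Subdivision

variable {α β : Type*} {H : SimpleGraph α} {Pe : Set (Sym2 α)} {J : SimpleGraph β}
  (F : Subdivision H Pe J)

lemma one_le_length_route ⦃u v : α⦄ (h : H.Adj u v) : 1 ≤ (F.route h).length :=
  Nat.one_le_iff_ne_zero.2 fun h0 => F.emb.injective.ne h.ne (eq_of_length_eq_zero h0)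

lemma mem_support_of_emb_mem_expand {a b z : α} {q : H.Walk a b}
    (hz : F.emb z ∈ (q.expand F.route).support) : z ∈ q.support := by
  rcases mem_support_expand F.route hz with h | ⟨c, d, h, he, hz⟩
  · rw [F.emb.injective h]; exact start_mem_support q
  · rcases F.eq_or_eq_of_emb_mem h hz with rfl | rfl
    · exact q.fst_mem_support_of_mem_edges he
    · exact q.snd_mem_support_of_mem_edges he

lemma isPath_expand {a b : α} {q : H.Walk a b} (hq : q.IsPath) : (q.expand F.route).IsPath := by
  induction q with
  | nil => exact .nil
  | @cons a b c h q ih =>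
    rw [cons_isPath_iff] at hq
    rw [expand_cons, isPath_def, support_append, List.nodup_append]
    refine ⟨(F.isPath_route h).support_nodup,
      (ih hq.1).support_nodup.sublist (List.tail_sublist _), ?_⟩
    rintro w hw _ hw' rfl
    have hwq : w ∈ (q.expand F.route).support := List.mem_of_mem_tail hw'
    have hwb : w ≠ F.emb b := by
      rintro rfl
      have := (ih hq.1).support_nodup
      rw [← cons_tail_support] at this
      exact (List.nodup_cons.1 this).1 hw'
    rcases mem_support_expand F.route hwq with h' | ⟨c, d, h', he, hw''⟩
    · exact hwb h'
    have hne : s(a, b) ≠ s(c, d) := fun heq => hq.2 (q.fst_mem_support_of_mem_edges (heq ▸ he))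
    rcases F.eq_or_eq_of_mem_route h h' hne hw hw'' with rfl | rfl
    · exact hq.2 (F.mem_support_of_emb_mem_expand hwq)
    · exact hwb rfl

lemma mem_edges_or_eq_emb_of_mem_route {a b c d : α} {q : H.Walk a b} {w : β}
    (hw : w ∈ (q.expand F.route).support) (h : H.Adj c d) (hw' : w ∈ (F.route h).support) :
    s(c, d) ∈ q.edges ∨ ∃ z ∈ q.support, w = F.emb z ∧ (z = c ∨ z = d) := by
  rcases mem_support_expand F.route hw with hwa | ⟨c', d', h', he, hw''⟩
  · exact .inr ⟨a, q.start_mem_support, hwa, F.eq_or_eq_of_emb_mem h (hwa ▸ hw')⟩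
  by_cases heq : s(c', d') = s(c, d)
  · exact .inl (heq ▸ he)
  refine .inr ?_
  rcases F.eq_or_eq_of_mem_route h' h heq hw'' hw' with hwz | hwz
  · exact ⟨c', q.fst_mem_support_of_mem_edges he, hwz, F.eq_or_eq_of_emb_mem h (hwz ▸ hw')⟩
  · exact ⟨d', q.snd_mem_support_of_mem_edges he, hwz, F.eq_or_eq_of_emb_mem h (hwz ▸ hw')⟩

lemma length_expand_of_edges_subset {a b : α} {q : H.Walk a b} (hq : ∀ e ∈ q.edges, e ∈ Pe) :
    (q.expand F.route).length = q.length :=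
  q.length_expand_of_forall_length_route_eq_one _ fun _ _ h he =>
    F.length_route_of_mem h (hq _ he)

end Subdivision

namespace SimpleGraph.IsTree

variable {α : Type*} {T : SimpleGraph α} (hT : T.IsTree) (x : α)

noncomputable def rootPath (u : α) : T.Walk x u := (hT.existsUnique_path x u).choose

local notation "R" => hT.rootPath x

lemma isPath_rootPath (u : α) : (R u).IsPath := (hT.existsUnique_path x u).choose_spec.1

lemma eq_rootPath {u : α} {q : T.Walk x u} (hq : q.IsPath) : q = R u :=
  (hT.existsUnique_path x u).choose_spec.2 q hq

variable {x}

lemma exists_rootPath_eq_append {u w : α} (hw : w ∈ (R u).support) :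
    ∃ r : T.Walk w u, R u = (R w).append r := by
  classical
  refine ⟨(R u).dropUntil w hw, ?_⟩
  rw [← hT.eq_rootPath x ((hT.isPath_rootPath x u).takeUntil hw), take_spec]

lemma length_rootPath_le {u w : α} (hw : w ∈ (R u).support) :
    (R w).length ≤ (R u).length := by
  obtain ⟨r, hr⟩ := hT.exists_rootPath_eq_append hw
  rw [hr, length_append]
  omega

lemma eq_of_mem_support_rootPath {u w : α} (hw : w ∈ (R u).support)
    (hl : (R u).length ≤ (R w).length) : u = w := by
  obtain ⟨r, hr⟩ := hT.exists_rootPath_eq_append hw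
  rw [hr, length_append] at hl
  exact (eq_of_length_eq_zero (by omega : r.length = 0)).symm

lemma rootPath_eq_concat_or {a b : α} (h : T.Adj a b) :
    R b = (R a).concat h ∨ R a = (R b).concat h.symm := by
  by_cases hb : b ∈ (R a).support
  · refine .inr (hT.eq_rootPath x ((hT.isPath_rootPath x b).concat (fun ha => h.ne ?_) _)).symm
    exact hT.eq_of_mem_support_rootPath hb (hT.length_rootPath_le ha)
  · exact .inl (hT.eq_rootPath x ((hT.isPath_rootPath x a).concat hb h)).symm

lemma exists_rootPath_eq_concat {u w : α} (hw : w ∈ (R u).support) (hne : w ≠ u) :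
    ∃ (v : α) (h : T.Adj v u), R u = (R v).concat h ∧ w ∈ (R v).support := by
  have hnil : ¬ (R u).Nil := fun hnil =>
    hne (hT.eq_of_mem_support_rootPath hw (by simp [length_eq_zero_iff.2 hnil])).symm
  have hu : R u = (R _).concat (adj_penultimate hnil) := by
    conv_lhs => rw [← concat_dropLast (adj_penultimate hnil)]
    rw [hT.eq_rootPath x (hT.isPath_rootPath x u).dropLast]
  refine ⟨_, adj_penultimate hnil, hu, ?_⟩
  rw [hu, support_concat] at hw
  simpa [hne] using hw

lemma exists_child_mem_support_rootPath {u c : α} (hc : c ∈ (R u).support) (hne : c ≠ u) :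
    ∃ (d : α) (h : T.Adj c d), R d = (R c).concat h ∧ d ∈ (R u).support := by
  induction hn : (R u).length generalizing u with
  | zero => exact absurd (hT.eq_of_mem_support_rootPath hc (by omega)) hne.symm
  | succ n ih =>
    obtain ⟨w, h, hw, hcw⟩ := hT.exists_rootPath_eq_concat hc hne
    by_cases hcw' : c = w
    · subst hcw'
      exact ⟨u, h, hw, end_mem_support _⟩
    obtain ⟨d, h', hd, hdw⟩ := ih hcw hcw' (by simpa [hw] using hn)
    exact ⟨d, h', hd, by simp [hw, support_concat, hdw]⟩

section Spine

variable {y : α} {p : T.Walk x y} (hp : p.IsPath)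
  (hspine : ∀ v : α, ThreeNbrs T v → v ∈ p.support)

include hp in
lemma edges_rootPath_subset {z : α} (hz : z ∈ p.support) : (R z).edges ⊆ p.edges := by
  classical
  rw [← hT.eq_rootPath x (hp.takeUntil hz)]
  exact p.edges_takeUntil_subset_edges hz

include hp in
lemma support_rootPath_subset {z : α} (hz : z ∈ p.support) : (R z).support ⊆ p.support := by
  classical
  rw [← hT.eq_rootPath x (hp.takeUntil hz)]
  exact p.support_takeUntil_subset_support hz

include hspine in
lemma eq_of_rootPath_eq_concat {c d d' : α} {h : T.Adj c d} {h' : T.Adj c d'}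
    (hc : c ∉ p.support) (hd : R d = (R c).concat h) (hd' : R d' = (R c).concat h') :
    d = d' := by
  have hxc : x ≠ c := fun hxc => hc (hxc ▸ p.start_mem_support)
  obtain ⟨w, hw, hcw, -⟩ := hT.exists_rootPath_eq_concat (R c).start_mem_support hxc
  have hwc : w ∈ (R c).support := by simp [hcw, support_concat]
  have hnot : ∀ {d : α} {h : T.Adj c d}, R d = (R c).concat h → d ∉ (R c).support :=
    fun {d h} hd => ((concat_isPath_iff h).1 (hd ▸ hT.isPath_rootPath x d)).2
  by_contra hne
  exact hc (hspine c ⟨w, d, d', fun h => hnot hd (h ▸ hwc), fun h => hnot hd' (h ▸ hwc), hne,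
    hw.symm, h, h'⟩)

include hp hspine in
lemma eq_of_length_rootPath_eq {d u v : α} (hd : d ∉ p.support) (hu : d ∈ (R u).support)
    (hv : d ∈ (R v).support) (huv : (R u).length = (R v).length) : u = v := by
  induction hn : (R u).length generalizing u v with
  | zero =>
    rw [hT.eq_of_mem_support_rootPath hu (by omega), hT.eq_of_mem_support_rootPath hv (by omega)]
  | succ n ih =>
    by_cases hdu : d = u
    · subst hdu
      exact (hT.eq_of_mem_support_rootPath hv huv.ge).symm
    have hdv : d ≠ v := by
      rintro rfl
      exact hdu (hT.eq_of_mem_support_rootPath hu huv.le).symm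
    obtain ⟨u', hu', hru, hdu'⟩ := hT.exists_rootPath_eq_concat hu hdu
    obtain ⟨v', hv', hrv, hdv'⟩ := hT.exists_rootPath_eq_concat hv hdv
    rw [hru, length_concat] at huv hn
    rw [hrv, length_concat] at huv
    obtain rfl : u' = v' := ih hdu' hdv' (by omega) (by omega)
    exact hT.eq_of_rootPath_eq_concat hspine
      (fun hu's => hd (hT.support_rootPath_subset hp hu's hdu')) hru hrv

include hp hspine in
lemma adj_of_length_rootPath_eq_succ {d u v : α} (hd : d ∉ p.support)
    (hu : d ∈ (R u).support) (hv : d ∈ (R v).support)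
    (huv : (R v).length = (R u).length + 1) : T.Adj u v := by
  have hdv : d ≠ v := by
    rintro rfl
    have := hT.length_rootPath_le hu
    omega
  obtain ⟨v', hv', hrv, hdv'⟩ := hT.exists_rootPath_eq_concat hv hdv
  rw [hrv, length_concat] at huv
  obtain rfl : u = v' := hT.eq_of_length_rootPath_eq hp hspine hd hu hdv' (by omega)
  exact hv'

end Spine

end SimpleGraph.IsTree

namespace Subdivision

variable {α β : Type*} {T : SimpleGraph α} {J : SimpleGraph β} (hT : T.IsTree) (x : α)

section General

variable {Pe : Set (Sym2 α)} (F : Subdivision T Pe J)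

noncomputable def copyMap (u : α) : β :=
  ((hT.rootPath x u).expand F.route).getVert (hT.rootPath x u).length

local notation "R" => hT.rootPath x
local notation "E" u:max => Walk.expand (Subdivision.route F) (IsTree.rootPath hT x u)
local notation "g" => F.copyMap hT x

lemma copyMap_mem_support (u : α) : g u ∈ (E u).support := getVert_mem_support _ _

lemma length_rootPath_le_length_expand (u : α) : (R u).length ≤ (E u).length :=
  length_le_length_expand _ F.one_le_length_route _

lemma length_rootPath_eq_of_copyMap_eq {u : α} {i : ℕ} (hi : i ≤ (E u).length)
    (h : g u = (E u).getVert i) : (R u).length = i :=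
  (F.isPath_expand (hT.isPath_rootPath x u)).getVert_injOn
    (F.length_rootPath_le_length_expand hT x u) hi h

lemma getVert_expand_rootPath_of_mem {u w : α} (hw : w ∈ (R u).support) :
    (E w).length ≤ (E u).length ∧ (E u).getVert (E w).length = F.emb w := by
  obtain ⟨r, hr⟩ := hT.exists_rootPath_eq_append hw
  rw [hr, expand_append, length_append, getVert_append', if_pos le_rfl, getVert_length]
  exact ⟨by omega, rfl⟩

lemma getVert_expand_rootPath_of_concat {c d u : α} {h : T.Adj c d} {t : ℕ}
    (hcd : R d = (R c).concat h) (hd : d ∈ (R u).support) (ht : t ≤ (F.route h).length) :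
    (E c).length + t ≤ (E u).length ∧
      (E u).getVert ((E c).length + t) = (F.route h).getVert t := by
  obtain ⟨r, hr⟩ := hT.exists_rootPath_eq_append hd
  rw [hr, hcd, expand_append, expand_concat, length_append, length_append, getVert_append',
    if_pos (by rw [length_append]; omega), getVert_append, if_neg (by omega),
    Nat.add_sub_cancel_left]
  exact ⟨by omega, rfl⟩

lemma adj_copyMap {u v : α} (h : T.Adj u v) : J.Adj (g u) (g v) := by
  suffices key : ∀ {a b : α} (h : T.Adj a b), R b = (R a).concat h → J.Adj (g a) (g b) by
    rcases hT.rootPath_eq_concat_or h with hv | hu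
    · exact key h hv
    · exact (key h.symm hu).symm
  intro a b h hab
  have ha := F.length_rootPath_le_length_expand hT x a
  have hb := F.one_le_length_route h
  have hE : E b = (E a).append (F.route h) := by rw [hab, expand_concat]
  have hadj := (E b).adj_getVert_succ (i := (R a).length) (by rw [hE, length_append]; omega)
  rwa [hE, getVert_append', if_pos ha, ← hE, show (R a).length + 1 = (R b).length by
    rw [hab, length_concat]] at hadj

lemma exists_rootPath_eq_concat_of_mem_route {a b : α} (h : T.Adj a b) {w : β}
    (hw : w ∈ (F.route h).support) :
    ∃ (c d : α) (h' : T.Adj c d), R d = (R c).concat h' ∧ w ∈ (F.route h').support := by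
  rcases hT.rootPath_eq_concat_or h with hab | hba
  · exact ⟨a, b, h, hab, hw⟩
  · refine ⟨b, a, h.symm, hba, ?_⟩
    rwa [F.route_symm, support_reverse, List.mem_reverse]

lemma exists_rootPath_eq_concat_of_mem_edges {a b : α} (h : T.Adj a b) {e : Sym2 β}
    (he : e ∈ (F.route h).edges) :
    ∃ (c d : α) (h' : T.Adj c d), R d = (R c).concat h' ∧ e ∈ (F.route h').edges := by
  rcases hT.rootPath_eq_concat_or h with hab | hba
  · exact ⟨a, b, h, hab, he⟩
  · refine ⟨b, a, h.symm, hba, ?_⟩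
    rwa [F.route_symm, edges_reverse, List.mem_reverse]

end General

section Spine

variable {x} {y : α} {p : T.Walk x y} (F : Subdivision T {e | e ∈ p.edges} J) (hp : p.IsPath)
  (hspine : ∀ v : α, ThreeNbrs T v → v ∈ p.support)

local notation "R" => hT.rootPath x
local notation "E" u:max => Walk.expand (Subdivision.route F) (IsTree.rootPath hT x u)
local notation "g" => F.copyMap hT x

include hp in
lemma length_expand_rootPath_of_mem {z : α} (hz : z ∈ p.support) :
    (E z).length = (R z).length :=
  F.length_expand_of_edges_subset (hT.edges_rootPath_subset hp hz)

include hp in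
lemma eq_of_copyMap_eq_emb {u z : α} (hz : z ∈ p.support) (h : g u = F.emb z) : u = z := by
  have hzu : z ∈ (R u).support :=
    F.mem_support_of_emb_mem_expand (h ▸ F.copyMap_mem_support hT x u)
  obtain ⟨hle, hget⟩ := F.getVert_expand_rootPath_of_mem hT x hzu
  have := F.length_rootPath_eq_of_copyMap_eq hT x hle (h.trans hget.symm)
  exact hT.eq_of_mem_support_rootPath hzu (by rw [this, F.length_expand_rootPath_of_mem hT hp hz])

include hp in
lemma length_route_eq_one_of_mem {c d : α} {h : T.Adj c d}
    (hcd : R d = (R c).concat h) (hd : d ∈ p.support) :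
    (F.route h).length = 1 ∧ (E c).length = (R c).length := by
  have hcd_mem : s(c, d) ∈ p.edges := hT.edges_rootPath_subset hp hd (by simp [hcd, edges_concat])
  exact ⟨F.length_route_of_mem h hcd_mem,
    F.length_expand_rootPath_of_mem hT hp (p.fst_mem_support_of_mem_edges hcd_mem)⟩

include hp hspine in
lemma eq_or_mem_of_copyMap_eq_emb {c d u : α} {h : T.Adj c d} (hcd : R d = (R c).concat h)
    (hc : c ∈ (R u).support) (hg : g u = F.emb c) : u = c ∨ d ∈ (R u).support := by
  by_cases huc : u = c
  · exact .inl huc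
  obtain ⟨d', h', hd', hd'u⟩ := hT.exists_child_mem_support_rootPath hc (Ne.symm huc)
  have hcs : c ∉ p.support := fun hcs => huc (F.eq_of_copyMap_eq_emb hT hp hcs hg)
  exact .inr (hT.eq_of_rootPath_eq_concat hspine hcs hcd hd' ▸ hd'u)

include hp hspine in
lemma length_rootPath_eq_of_copyMap_eq_getVert {c d u : α} {h : T.Adj c d} {t : ℕ}
    (hcd : R d = (R c).concat h) (ht : t ≤ (F.route h).length)
    (hg : g u = (F.route h).getVert t) :
    (R u).length = (E c).length + t ∧ (u = c ∨ d ∈ (R u).support) := by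
  have hmem : d ∈ (R u).support ∨ (u = c ∧ g u = F.emb c) := by
    rcases F.mem_edges_or_eq_emb_of_mem_route (F.copyMap_mem_support hT x u) h
      (hg ▸ getVert_mem_support _ _) with he | ⟨z, hz, hgz, rfl | rfl⟩
    · exact .inl ((R u).snd_mem_support_of_mem_edges he)
    · exact ((F.eq_or_mem_of_copyMap_eq_emb hT hp hspine hcd hz hgz).imp_left
        fun huz => ⟨huz, hgz⟩).symm
    · exact .inl hz
  rcases hmem with hd | ⟨rfl, hgc⟩
  · obtain ⟨hle, hget⟩ := F.getVert_expand_rootPath_of_concat hT x hcd hd ht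
    exact ⟨F.length_rootPath_eq_of_copyMap_eq hT x hle (hg.trans hget.symm), .inr hd⟩
  · have ht0 : t = 0 := ((F.isPath_route h).getVert_eq_start_iff ht).1 (hg.symm.trans hgc)
    refine ⟨?_, .inl rfl⟩
    rw [ht0, add_zero]
    exact F.length_rootPath_eq_of_copyMap_eq hT x le_rfl (hgc.trans (getVert_length _).symm)

include hp hspine in
lemma eq_of_copyMap_eq_getVert_route {c d u v : α} {h : T.Adj c d} {t : ℕ}
    (hcd : R d = (R c).concat h) (ht : t ≤ (F.route h).length)
    (hu : g u = (F.route h).getVert t) (hv : g v = (F.route h).getVert t) : u = v := by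
  obtain ⟨hnu, hu'⟩ := F.length_rootPath_eq_of_copyMap_eq_getVert hT hp hspine hcd ht hu
  obtain ⟨hnv, hv'⟩ := F.length_rootPath_eq_of_copyMap_eq_getVert hT hp hspine hcd ht hv
  have hnd : (R d).length = (R c).length + 1 := by rw [hcd, length_concat]
  have deep : ∀ {w : α}, d ∈ (R w).support → (R c).length < (R w).length := fun hw => by
    have := hT.length_rootPath_le hw
    omega
  rcases hu' with rfl | hdu <;> rcases hv' with rfl | hdv
  · rfl
  · have := deep hdv
    omega
  · have := deep hdu
    omega
  by_cases hds : d ∈ p.support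
  · obtain ⟨hl, hEc⟩ := F.length_route_eq_one_of_mem hT hp hcd hds
    rw [hT.eq_of_mem_support_rootPath hdu (by omega), hT.eq_of_mem_support_rootPath hdv (by omega)]
  · exact hT.eq_of_length_rootPath_eq hp hspine hds hdu hdv (by omega)

include hp hspine in
lemma adj_of_copyMap_eq_getVert_route {c d u v : α} {h : T.Adj c d} {i : ℕ}
    (hcd : R d = (R c).concat h) (hi : i < (F.route h).length)
    (hu : g u = (F.route h).getVert i) (hv : g v = (F.route h).getVert (i + 1)) :
    T.Adj u v := by
  obtain ⟨hnu, hu'⟩ := F.length_rootPath_eq_of_copyMap_eq_getVert hT hp hspine hcd hi.le hu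
  obtain ⟨hnv, hv'⟩ := F.length_rootPath_eq_of_copyMap_eq_getVert hT hp hspine hcd hi hv
  have hnd : (R d).length = (R c).length + 1 := by rw [hcd, length_concat]
  have hcE := F.length_rootPath_le_length_expand hT x c
  rcases hv' with rfl | hdv
  · omega
  rcases hu' with rfl | hdu
  · rwa [hT.eq_of_mem_support_rootPath hdv (by omega)]
  by_cases hds : d ∈ p.support
  · obtain ⟨hl, hEc⟩ := F.length_route_eq_one_of_mem hT hp hcd hds
    have := hT.length_rootPath_le hdu
    omega
  · exact hT.adj_of_length_rootPath_eq_succ hp hspine hds hdu hdv (by omega)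

include hp hspine in
lemma copyMap_injective : Function.Injective g := by
  intro u v huv
  rcases mem_support_expand F.route (F.copyMap_mem_support hT x u) with hx | ⟨a, b, h, -, hu⟩
  · exact (F.eq_of_copyMap_eq_emb hT hp p.start_mem_support hx).trans
      (F.eq_of_copyMap_eq_emb hT hp p.start_mem_support (huv ▸ hx)).symm
  obtain ⟨c, d, h', hcd, hu'⟩ := F.exists_rootPath_eq_concat_of_mem_route hT x h hu
  obtain ⟨t, ht, htl⟩ := mem_support_iff_exists_getVert.1 hu'
  exact F.eq_of_copyMap_eq_getVert_route hT hp hspine hcd htl ht.symm (huv ▸ ht.symm)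

include hp hspine in
lemma adj_of_adj_copyMap {u v : α} (h : J.Adj (g u) (g v)) : T.Adj u v := by
  obtain ⟨a, b, hab, he⟩ := F.exists_mem_edges_route h
  obtain ⟨c, d, h', hcd, he'⟩ := F.exists_rootPath_eq_concat_of_mem_edges hT x hab he
  obtain ⟨i, hi, hi'⟩ := (mk_mem_edges_iff_exists _).1 he'
  rcases Sym2.eq_iff.1 hi' with ⟨hu, hv⟩ | ⟨hv, hu⟩
  · exact F.adj_of_copyMap_eq_getVert_route hT hp hspine hcd hi hu.symm hv.symm
  · exact (F.adj_of_copyMap_eq_getVert_route hT hp hspine hcd hi hv.symm hu.symm).symm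

end Spine

end Subdivision

theorem stmt_18 {α β : Type*} (T : SimpleGraph α) (hT : T.IsTree)
    (x y : α) (p : T.Walk x y) (hp : p.IsPath)
    (hspine : ∀ v : α, ThreeNbrs T v → v ∈ p.support)
    (J : SimpleGraph β) (hJ : IsFilleting T {e | e ∈ p.edges} J) :
    ∃ g : α ↪ β, ∀ u v : α, T.Adj u v ↔ J.Adj (g u) (g v) := by
  obtain ⟨F⟩ := hJ.nonempty_subdivision
  exact ⟨⟨F.copyMap hT x, F.copyMap_injective hT hp hspine⟩,
    fun u v => ⟨F.adj_copyMap hT x, F.adj_of_adj_copyMap hT hp hspine⟩⟩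
end

section
/- Let H be a graph with a path P on vertices v₁,…,v_k and remaining vertices v_{k+1},…,v_n. Form H' from H by adding new vertices u_{k+1},…,u_n, where u_i is adjacent exactly to v_{i−1} and v_i, and let P' be the path v₁,…,v_k, u_{k+1}, v_{k+1}, u_{k+2}, …, u_n, v_n. Then P' is a Hamilton path of H', and every P'-filleting of H' contains an induced P-filleting of H. -/
/-- The vertex `v_{i-1}` preceding the new vertex `u_i`: for `i = 0` it is the last
vertex `y` of the path `P`, and otherwise it is the previous remaining vertex. -/
def auxPrev {α : Type*} (y : α) (ws : List α) (i : Fin ws.length) : α :=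
  if h : i.1 = 0 then y else ws.get ⟨i.1 - 1, lt_of_le_of_lt (Nat.sub_le _ _) i.2⟩

/-- The graph `H'` obtained from `H` by adding, for each remaining (non-path) vertex
`ws.get i`, a new vertex `Sum.inr i` adjacent exactly to the preceding vertex and to
`ws.get i`. -/
def HPrime {α : Type*} [DecidableEq α] (H : SimpleGraph α) (y : α) (ws : List α) :
    SimpleGraph (α ⊕ Fin ws.length) :=
  SimpleGraph.fromRel (fun a b =>
    match a, b with
    | Sum.inl a, Sum.inl b => H.Adj a b
    | Sum.inl a, Sum.inr i => a = auxPrev y ws i ∨ a = ws.get i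
    | _, _ => False)

/-!
`P'` follows `P` and then alternates `u_i, v_i`, so it visits every vertex exactly once.
Every edge of `H'` at a new vertex `u_i` lies on `P'`, hence is not subdivided in a
`P'`-filleting `J`. Deleting from `J` the images of the `u_i` thus removes exactly these
edges and no subdivision vertex of an edge of `H`, and since an edge of `H` lies on `P` iff
it lies on `P'`, the induced subgraph on the remaining vertices is a `P`-filleting of `H`.
-/

open SimpleGraph

namespace SimpleGraph.Walk

variable {V : Type*} {G : SimpleGraph V} {u v : V}

theorem eq_toWalk_of_length_eq_one {w : G.Walk u v} (h : w.length = 1) :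
    w = (adj_of_length_eq_one h).toWalk := by
  cases w with
  | nil => simp at h
  | cons _ q => cases q with
    | nil => rfl
    | cons => simp at h

variable {s : Set V} {w : G.Walk u v}

theorem length_induce (hw : ∀ x ∈ w.support, x ∈ s) : (w.induce s hw).length = w.length := by
  have h := congrArg length (map_induce w hw)
  rw [length_map] at h
  exact h

theorem mk_mem_edges_induce (hw : ∀ x ∈ w.support, x ∈ s) {a b : s} :
    s(a, b) ∈ (w.induce s hw).edges ↔ s(a.1, b.1) ∈ w.edges := by
  have h := congrArg edges (map_induce w hw)
  rw [edges_map] at h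
  rw [show w.edges = _ from h.symm]
  exact (List.mem_map_of_injective (Sym2.map.injective Subtype.val_injective)).symm

theorem mem_support_induce (hw : ∀ x ∈ w.support, x ∈ s) {x : s} :
    x ∈ (w.induce s hw).support ↔ x.1 ∈ w.support := by
  simp

theorem IsPath.induce (hp : w.IsPath) (hw : ∀ x ∈ w.support, x ∈ s) :
    (w.induce s hw).IsPath := by
  rw [← map_induce w hw] at hp
  exact hp.of_map

end SimpleGraph.Walk

namespace IsFilleting

variable {α α' β : Type*} {H : SimpleGraph α} {H' : SimpleGraph α'} {J : SimpleGraph β}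
  {Pe : Set (Sym2 α)} {Pe' : Set (Sym2 α')}

theorem exists_induce_of_embedding (hJ : IsFilleting H' Pe' J) (g : H ↪g H')
    (hPe : ∀ a b, s(g a, g b) ∈ Pe' ↔ s(a, b) ∈ Pe)
    (hout : ∀ u v, H'.Adj u v → u ∉ Set.range g → s(u, v) ∈ Pe') :
    ∃ S : Set β, IsFilleting H Pe (J.induce S) := by
  obtain ⟨f, route, hpath, hrev, hone, htwo, hnew, hdisj, hedge, hvert⟩ := hJ
  let S : Set β := {b | ∀ u ∉ Set.range g, f u ≠ b}
  have hfS (a : α) : f (g a) ∈ S := fun u hu hfu => hu ⟨a, (f.injective hfu).symm⟩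
  have hroute {a b : α} (h : H.Adj a b) :
      ∀ w ∈ (route (g.map_adj_iff.2 h)).support, w ∈ S := by
    intro w hw
    by_cases ha : w = f (g a)
    · exact ha ▸ hfS a
    by_cases hb : w = f (g b)
    · exact hb ▸ hfS b
    exact fun u _ => hnew _ _ _ w hw ha hb u
  have hshort {u v : α'} (h : H'.Adj u v) (huv : ¬ (u ∈ Set.range g ∧ v ∈ Set.range g)) :
      ¬ (f u ∈ S ∧ f v ∈ S) ∧ (route h).support = [f u, f v] ∧
        (route h).edges = [s(f u, f v)] := by
    have hP : s(u, v) ∈ Pe' := by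
      rcases not_and_or.1 huv with hu | hv
      · exact hout u v h hu
      · exact Sym2.eq_swap ▸ hout v u h.symm hv
    rw [Walk.eq_toWalk_of_length_eq_one (hone u v h hP)]
    refine ⟨fun hS => ?_, Adj.support_toWalk _, Adj.edges_toWalk _⟩
    rcases not_and_or.1 huv with hu | hv
    · exact hS.1 u hu rfl
    · exact hS.2 v hv rfl
  let f' : α ↪ S := ⟨fun a => ⟨f (g a), hfS a⟩,
    fun a b hab => g.injective (f.injective (congrArg Subtype.val hab))⟩
  refine ⟨S, f', fun a b h => (route (g.map_adj_iff.2 h)).induce S (hroute h),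
    fun a b h => (hpath _ _ _).induce _, fun a b h => ?_, fun a b h hP => ?_,
    fun a b h hP => ?_, fun a b h w hw ha hb x => ?_, fun a b c d h h' hne w hw ha hb => ?_,
    fun a' b' hab => ?_, fun b' => ?_⟩
  · apply Walk.map_injective_of_injective (f := (Embedding.induce S).toHom) Subtype.val_injective
    rw [Walk.map_induce, ← Walk.reverse_map, Walk.map_induce]
    exact hrev _ _ _
  · rw [Walk.length_induce]
    exact hone _ _ _ ((hPe a b).2 hP)
  · rw [Walk.length_induce]
    exact htwo _ _ _ (mt (hPe a b).1 hP)
  · rw [Walk.mem_support_induce] at hw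
    exact fun hx => hnew _ _ _ _ hw (fun e => ha (Subtype.ext e)) (fun e => hb (Subtype.ext e))
      (g x) (congrArg Subtype.val hx)
  · rw [Walk.mem_support_induce] at hw ⊢
    refine hdisj _ _ _ _ _ _ (fun e => hne (Sym2.map.injective g.injective ?_)) _ hw
      (fun e => ha (Subtype.ext e)) (fun e => hb (Subtype.ext e))
    simpa using e
  · obtain ⟨u, v, h, he⟩ := hedge _ _ hab
    by_cases hin : u ∈ Set.range g ∧ v ∈ Set.range g
    · obtain ⟨⟨a, rfl⟩, ⟨b, rfl⟩⟩ := hin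
      exact ⟨a, b, g.map_adj_iff.1 h, (Walk.mk_mem_edges_induce _).2 he⟩
    · obtain ⟨hS, -, hedges⟩ := hshort h hin
      rw [hedges, List.mem_singleton, Sym2.eq_iff] at he
      rcases he with ⟨ha, hb⟩ | ⟨ha, hb⟩
      · exact absurd ⟨ha ▸ a'.2, hb ▸ b'.2⟩ hS
      · exact absurd ⟨hb ▸ b'.2, ha ▸ a'.2⟩ hS
  · have hrange {x : α'} (hx : f x = b') : ∃ a, f' a = b' := by
      by_cases hx' : x ∈ Set.range g
      · obtain ⟨a, rfl⟩ := hx'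
        exact ⟨a, Subtype.ext hx⟩
      · exact absurd hx (b'.2 x hx')
    obtain ⟨x, hx⟩ | ⟨u, v, h, hb⟩ := hvert b'
    · exact .inl (hrange hx)
    by_cases hin : u ∈ Set.range g ∧ v ∈ Set.range g
    · obtain ⟨⟨a, rfl⟩, ⟨b, rfl⟩⟩ := hin
      exact .inr ⟨a, b, g.map_adj_iff.1 h, (Walk.mem_support_induce _).2 hb⟩
    · rw [(hshort h hin).2.1, List.mem_pair] at hb
      exact .inl (hb.elim (fun e => hrange e.symm) (fun e => hrange e.symm))

end IsFilleting

theorem auxPrev_eq_getD {α : Type*} {y : α} {ws : List α} (i : Fin ws.length) :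
    auxPrev y ws i = (y :: ws).getD i y := by
  unfold auxPrev
  split_ifs with h
  · simp [h]
  · obtain ⟨k, hk⟩ := Nat.exists_eq_succ_of_ne_zero h
    have : k < ws.length := by omega
    simp [hk, this]

namespace HPrime

variable {α : Type*} {y : α} {ws : List α}

def segmentSupport (ws : List α) (i : Fin ws.length) : List (α ⊕ Fin ws.length) :=
  [.inr i, .inl (ws.get i)]

def segmentEdges (y : α) (ws : List α) (i : Fin ws.length) : List (Sym2 (α ⊕ Fin ws.length)) :=
  [s(.inl (auxPrev y ws i), .inr i), s(.inr i, .inl (ws.get i))]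

theorem mem_flatten_segmentSupport {v : α ⊕ Fin ws.length} :
    v ∈ (List.ofFn (segmentSupport ws)).flatten ↔ ∃ i, v = .inr i ∨ v = .inl (ws.get i) := by
  simp [segmentSupport, List.mem_flatten, List.mem_ofFn, eq_comm]

theorem nodup_flatten_segmentSupport (hnd : ws.Nodup) :
    (List.ofFn (segmentSupport ws)).flatten.Nodup := by
  rw [List.nodup_flatten, List.pairwise_ofFn]
  refine ⟨by simp [segmentSupport, List.mem_ofFn], fun i j hij => ?_⟩
  have hji : j ≠ i := hij.ne'
  simpa [segmentSupport, hji] using fun h => hji (Fin.ext (hnd.getElem_inj_iff.1 h))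

theorem nodup_map_inl_append_flatten_segmentSupport {l : List α} (hl : l.Nodup)
    (hnd : ws.Nodup) (hdisj : ∀ a ∈ ws, a ∉ l) :
    (l.map Sum.inl ++ (List.ofFn (segmentSupport ws)).flatten).Nodup := by
  refine (hl.map Sum.inl_injective).append (nodup_flatten_segmentSupport hnd) ?_
  simp only [List.disjoint_left, List.mem_map, mem_flatten_segmentSupport]
  rintro _ ⟨a, ha, rfl⟩ ⟨i, h | h⟩
  · exact Sum.inl_ne_inr h
  · exact hdisj _ (Sum.inl_injective h ▸ List.get_mem ws i) ha

theorem mem_map_inl_append_flatten_segmentSupport {l : List α} (hcov : ∀ a, a ∈ l ∨ a ∈ ws)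
    (v : α ⊕ Fin ws.length) : v ∈ l.map Sum.inl ++ (List.ofFn (segmentSupport ws)).flatten := by
  rw [List.mem_append, mem_flatten_segmentSupport]
  rcases v with a | i
  · rcases hcov a with ha | ha
    · exact .inl (List.mem_map_of_mem ha)
    · obtain ⟨i, rfl⟩ := List.mem_iff_get.1 ha
      exact .inr ⟨i, .inr rfl⟩
  · exact .inr ⟨i, .inl rfl⟩

theorem mk_inl_inl_not_mem_flatten_segmentEdges {a b : α} :
    s(.inl a, .inl b) ∉ (List.ofFn (segmentEdges y ws)).flatten := by
  simp [segmentEdges, List.mem_flatten, List.mem_ofFn]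

variable [DecidableEq α] {H : SimpleGraph α}

@[simp]
theorem adj_inl_inl {a b : α} : (HPrime H y ws).Adj (.inl a) (.inl b) ↔ H.Adj a b := by
  simp only [HPrime, fromRel_adj, ne_eq, Sum.inl.injEq]
  exact ⟨fun ⟨_, h⟩ => h.elim id fun h => h.symm, fun h => ⟨h.ne, .inl h⟩⟩

@[simp]
theorem adj_inl_inr {a : α} {i : Fin ws.length} :
    (HPrime H y ws).Adj (.inl a) (.inr i) ↔ a = auxPrev y ws i ∨ a = ws.get i := by
  simp [HPrime]

@[simp]
theorem not_adj_inr_inr {i j : Fin ws.length} : ¬ (HPrime H y ws).Adj (.inr i) (.inr j) := by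
  simp [HPrime]

def inlEmbedding (H : SimpleGraph α) (y : α) (ws : List α) : H ↪g HPrime H y ws where
  toEmbedding := .inl
  map_rel_iff' := adj_inl_inl

theorem mk_inr_mem_flatten_segmentEdges {i : Fin ws.length} {v : α ⊕ Fin ws.length}
    (h : (HPrime H y ws).Adj (.inr i) v) :
    s(.inr i, v) ∈ (List.ofFn (segmentEdges y ws)).flatten := by
  rcases v with a | j
  · rw [List.mem_flatten]
    refine ⟨_, List.mem_ofFn.2 ⟨i, rfl⟩, ?_⟩
    obtain rfl | rfl := adj_inl_inr.1 h.symm <;> simp [segmentEdges]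
  · exact absurd h not_adj_inr_inr

/-- `(y :: ws).getD k y` is the vertex preceding `u_k`; for `k = 0` it is the end `y` of `P`. -/
theorem exists_walk_segments_from (m k : ℕ) (hmk : m + k = ws.length) :
    ∃ w : (HPrime H y ws).Walk (.inl ((y :: ws).getD k y)) (.inl ((y :: ws).getD ws.length y)),
      w.support = .inl ((y :: ws).getD k y) ::
        (List.ofFn fun j : Fin m => segmentSupport ws ⟨j + k, by omega⟩).flatten ∧
      w.edges = (List.ofFn fun j : Fin m => segmentEdges y ws ⟨j + k, by omega⟩).flatten := by
  induction m generalizing k with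
  | zero =>
    obtain rfl : k = ws.length := by omega
    exact ⟨.nil, rfl, rfl⟩
  | succ m ih =>
    obtain ⟨w, hsupp, hedges⟩ := ih (k + 1) (by omega)
    have hk : k < ws.length := by omega
    have hnext : (y :: ws).getD (k + 1) y = ws.get ⟨k, hk⟩ := by simp [hk]
    have hprev : (y :: ws).getD k y = auxPrev y ws ⟨k, hk⟩ := (auxPrev_eq_getD ⟨k, hk⟩).symm
    refine ⟨.cons (adj_inl_inr.2 (.inl hprev)) (.cons (adj_inl_inr.2 (.inr hnext)).symm w),
      ?_, ?_⟩
    · rw [Walk.support_cons, Walk.support_cons, hsupp, hnext]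
      simp only [List.ofFn_succ, List.flatten_cons, Fin.val_succ, Fin.val_zero, Nat.zero_add,
        Nat.add_right_comm _ 1 k, Nat.add_assoc]
      rfl
    · rw [Walk.edges_cons, Walk.edges_cons, hedges, hnext, hprev]
      simp only [List.ofFn_succ, List.flatten_cons, Fin.val_succ, Fin.val_zero, Nat.zero_add,
        Nat.add_right_comm _ 1 k, Nat.add_assoc]
      rfl

theorem exists_walk_append_segments {x : α} (p : H.Walk x y) :
    ∃ w : (HPrime H y ws).Walk (.inl x) (.inl ((y :: ws).getD ws.length y)),
      w.support = p.support.map Sum.inl ++ (List.ofFn (segmentSupport ws)).flatten ∧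
      w.edges = p.edges.map (Sym2.map Sum.inl) ++ (List.ofFn (segmentEdges y ws)).flatten := by
  obtain ⟨t, ht_supp, ht_edges⟩ := exists_walk_segments_from (H := H) (y := y) ws.length 0 rfl
  exact ⟨(p.map (inlEmbedding H y ws).toHom).append t,
    (Walk.support_append _ _).trans (congrArg₂ (· ++ ·) (Walk.support_map _ _)
      (congrArg List.tail ht_supp)),
    (Walk.edges_append _ _).trans (congrArg₂ (· ++ ·) (Walk.edges_map _ _) ht_edges)⟩

end HPrime

theorem stmt_19 {α : Type} [DecidableEq α] (H : SimpleGraph α) (x y : α)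
    (p : H.Walk x y) (hp : p.IsPath) (ws : List α) (hnd : ws.Nodup)
    (hdisj : ∀ a ∈ ws, a ∉ p.support) (hcov : ∀ a : α, a ∈ p.support ∨ a ∈ ws) :
    ∃ (z : α ⊕ Fin ws.length) (p' : (HPrime H y ws).Walk (Sum.inl x) z),
      p'.IsPath ∧ (∀ v : α ⊕ Fin ws.length, v ∈ p'.support) ∧
      p'.support = p.support.map Sum.inl ++
        (List.ofFn (fun i : Fin ws.length =>
          [Sum.inr i, Sum.inl (ws.get i)] : Fin ws.length → List (α ⊕ Fin ws.length))).flatten ∧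
      ∀ (β : Type) (J : SimpleGraph β),
        IsFilleting (HPrime H y ws) {e | e ∈ p'.edges} J →
          ∃ S : Set β, IsFilleting H {e | e ∈ p.edges} (J.induce S) := by
  obtain ⟨p', hsupp, hedges⟩ := HPrime.exists_walk_append_segments (ws := ws) p
  refine ⟨_, p', ?_, fun v => ?_, hsupp, fun β J hJ =>
    hJ.exists_induce_of_embedding (HPrime.inlEmbedding H y ws) (fun a b => ?_) ?_⟩
  · rw [Walk.isPath_def, hsupp]
    exact HPrime.nodup_map_inl_append_flatten_segmentSupport hp.support_nodup hnd hdisj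
  · exact hsupp ▸ HPrime.mem_map_inl_append_flatten_segmentSupport hcov v
  · show s(.inl a, .inl b) ∈ p'.edges ↔ _
    rw [hedges, List.mem_append, or_iff_left HPrime.mk_inl_inl_not_mem_flatten_segmentEdges,
      ← Sym2.map_mk]
    exact List.mem_map_of_injective (Sym2.map.injective Sum.inl_injective)
  · rintro (a | i) v h hout
    · exact absurd ⟨a, rfl⟩ hout
    · exact hedges ▸ List.mem_append_right _ (HPrime.mk_inr_mem_flatten_segmentEdges h)
end
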